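/- arXiv:1311.3044 — 3 statements merged into one kernel-verified Lean document; each statement's English description precedes it below -/
import Mathlib

section
/- Ramanujan's false theta identity: for |q|<1 and any complex a with the series convergent, ∑_{n=0}^∞ (−1)^n a^{2n} q^{n(n+1)/2} / (−aq;q)_n = ∑_{n=0}^∞ a^{3n} q^{n(3n+1)/2} (1 − a² q^{2n+1}). -/
open Finset

-- Weierstrass product lower bound
lemma weier (x : ℕ → ℝ) (hx0 : ∀ i, 0 ≤ x i) (hx1 : ∀ i, x i ≤ 1) (m : ℕ) :
    1 - ∑ i ∈ range m, x i ≤ ∏ i ∈ range m, (1 - x i) := by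
  induction m with
  | zero => simp
  | succ m ih =>
    rw [Finset.prod_range_succ, Finset.sum_range_succ]
    have h1 : 0 ≤ 1 - x m := by linarith [hx1 m]
    have h2 : 0 ≤ ∑ i ∈ range m, x i := Finset.sum_nonneg fun i _ => hx0 i
    nlinarith [hx0 m]

lemma exists_c {r : ℝ} (hr0 : 0 ≤ r) (hr : r < 1) :
    ∃ c > 0, ∀ n, c ≤ ∏ j ∈ range n, (1 - r ^ (j + 1)) := by
  obtain ⟨J, hJ⟩ : ∃ J, r ^ (J + 1) < (1 - r) / 2 := by
    obtain ⟨J, hJ⟩ := exists_pow_lt_of_lt_one (by linarith : (0:ℝ) < (1 - r)/2) hr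
    exact ⟨J, lt_of_le_of_lt (pow_le_pow_of_le_one hr0 hr.le (Nat.le_succ J)) hJ⟩
  have hpos : ∀ j : ℕ, 0 < 1 - r ^ (j + 1) := fun j => by
    have : r ^ (j+1) < 1 := pow_lt_one₀ hr0 hr (Nat.succ_ne_zero j)
    linarith
  set C := ∏ j ∈ range J, (1 - r ^ (j + 1)) with hC
  have hCpos : 0 < C := Finset.prod_pos fun j _ => hpos j
  refine ⟨C / 2, by positivity, fun n => ?_⟩
  rcases le_or_gt n J with h | h
  · calc C / 2 ≤ C := by linarith
    _ = (∏ j ∈ range n, (1 - r ^ (j+1))) * ∏ j ∈ Ico n J, (1 - r ^ (j+1)) := by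
        rw [hC, ← Finset.prod_range_mul_prod_Ico _ h]
    _ ≤ (∏ j ∈ range n, (1 - r ^ (j+1))) * 1 := by
        apply mul_le_mul_of_nonneg_left
        · apply Finset.prod_le_one (fun j _ => (hpos j).le) (fun j _ => by nlinarith [pow_nonneg hr0 (j+1)])
        · exact Finset.prod_nonneg fun j _ => (hpos j).le
    _ = _ := mul_one _
  · have key : (1:ℝ)/2 ≤ ∏ j ∈ Ico J n, (1 - r ^ (j+1)) := by
      have h1 : ∏ j ∈ Ico J n, (1 - r ^ (j+1)) = ∏ i ∈ range (n - J), (1 - r ^ (J + i + 1)) := by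
        rw [Finset.prod_Ico_eq_prod_range]
      rw [h1]
      have h2 : 1 - ∑ i ∈ range (n - J), r ^ (J + i + 1) ≤ ∏ i ∈ range (n-J), (1 - r ^ (J + i + 1)) :=
        weier _ (fun i => pow_nonneg hr0 _) (fun i => (pow_le_one₀ hr0 hr.le)) _
      have h3 : ∑ i ∈ range (n - J), r ^ (J + i + 1) ≤ r^(J+1) * (1 - r)⁻¹ := by
        have : ∀ i ∈ range (n - J), r ^ (J + i + 1) = r^(J+1) * r ^ i := fun i _ => by ring
        rw [Finset.sum_congr rfl this, ← Finset.mul_sum]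
        apply mul_le_mul_of_nonneg_left _ (pow_nonneg hr0 _)
        exact (Summable.sum_le_tsum _ (fun i _ => pow_nonneg hr0 i) (summable_geometric_of_lt_one hr0 hr)).trans
          (le_of_eq (tsum_geometric_of_lt_one hr0 hr))
      have h4 : r^(J+1) * (1-r)⁻¹ ≤ 1/2 := by
        rw [mul_inv_le_iff₀ (by linarith)]
        linarith
      linarith
    calc C / 2 = C * (1/2) := by ring
    _ ≤ C * ∏ j ∈ Ico J n, (1 - r ^ (j+1)) := by
        apply mul_le_mul_of_nonneg_left key hCpos.le
    _ = _ := by rw [hC, Finset.prod_range_mul_prod_Ico _ h.le]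
noncomputable section

namespace RFT

open Finset

variable (q : ℂ)

def Pp (b : ℂ) (n : ℕ) : ℂ := ∏ j ∈ range n, (1 + b * q ^ j)

def Uu (a b : ℂ) : ℂ := ∑' n : ℕ, (-a) ^ n * Pp q b n

def hTerm (a t : ℂ) (n : ℕ) : ℂ :=
  (-1) ^ n * t ^ n * a ^ n * q ^ (n * (n + 1) / 2) / Pp q (a * q) n

def Hh (a t : ℂ) : ℂ := ∑' n : ℕ, hTerm q a t n

def rhsTerm (a : ℂ) (n : ℕ) : ℂ := a ^ (3*n) * q ^ (n * (3*n + 1) / 2) * (1 - a ^ 2 * q ^ (2*n + 1))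

def Gg (a : ℂ) : ℂ := ∑' n : ℕ, rhsTerm q a n

variable {q : ℂ}

-- factor nonzero and bounds
lemma Pp_norm_ge (hq : ‖q‖ < 1) {b : ℂ} (hb : ‖b‖ ≤ ‖q‖) (n : ℕ) :
    ∏ j ∈ range n, (1 - ‖q‖ ^ (j+1)) ≤ ‖Pp q b n‖ := by
  rw [Pp, norm_prod]
  apply Finset.prod_le_prod
  · intro j _
    have : ‖q‖^(j+1) < 1 := pow_lt_one₀ (norm_nonneg q) hq (Nat.succ_ne_zero j)
    linarith
  · intro j _
    have h1 : ‖b * q ^ j‖ ≤ ‖q‖ ^ (j+1) := by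
      rw [norm_mul, norm_pow, pow_succ, mul_comm]
      exact mul_le_mul_of_nonneg_left hb (pow_nonneg (norm_nonneg q) j)
    have h2 := norm_sub_norm_le (1 : ℂ) (-(b * q ^ j))
    simp only [norm_neg, norm_one, sub_neg_eq_add] at h2
    linarith

lemma exists_cq (hq : ‖q‖ < 1) : ∃ c > 0, ∀ (b : ℂ), ‖b‖ ≤ ‖q‖ → ∀ n, c ≤ ‖Pp q b n‖ := by
  obtain ⟨c, hc, h⟩ := exists_c (norm_nonneg q) hq
  exact ⟨c, hc, fun b hb n => (h n).trans (Pp_norm_ge hq hb n)⟩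

lemma Pp_ne_zero (hq : ‖q‖ < 1) {b : ℂ} (hb : ‖b‖ ≤ ‖q‖) (n : ℕ) : Pp q b n ≠ 0 := by
  obtain ⟨c, hc, h⟩ := exists_cq hq
  intro h0
  have := h b hb n
  rw [h0, norm_zero] at this
  linarith

lemma Pp_norm_le (hq : ‖q‖ < 1) {b : ℂ} (hb : ‖b‖ ≤ 1) (n : ℕ) :
    ‖Pp q b n‖ ≤ Real.exp (1 - ‖q‖)⁻¹ := by
  rw [Pp, norm_prod]
  calc ∏ j ∈ range n, ‖1 + b * q ^ j‖ ≤ ∏ j ∈ range n, Real.exp (‖q‖ ^ j) := by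
        apply Finset.prod_le_prod (fun j _ => norm_nonneg _)
        intro j _
        calc ‖1 + b * q ^ j‖ ≤ ‖(1:ℂ)‖ + ‖b * q ^ j‖ := norm_add_le _ _
        _ ≤ 1 + ‖q‖ ^ j := by
            rw [norm_one, norm_mul, norm_pow]
            nlinarith [pow_nonneg (norm_nonneg q) j, mul_le_mul_of_nonneg_right hb (pow_nonneg (norm_nonneg q) j)]
        _ ≤ Real.exp (‖q‖ ^ j) := by
            have := Real.add_one_le_exp (‖q‖ ^ j)
            linarith
  _ = Real.exp (∑ j ∈ range n, ‖q‖ ^ j) := by rw [Real.exp_sum]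
  _ ≤ Real.exp (1 - ‖q‖)⁻¹ := by
      apply Real.exp_le_exp.2
      exact (Summable.sum_le_tsum _ (fun i _ => pow_nonneg (norm_nonneg q) i)
        (summable_geometric_of_lt_one (norm_nonneg q) hq)).trans
        (le_of_eq (tsum_geometric_of_lt_one (norm_nonneg q) hq))

lemma tri_ge (n : ℕ) : n ≤ n * (n + 1) / 2 := by
  rcases Nat.eq_zero_or_pos n with h | h
  · simp [h]
  · rw [Nat.le_div_iff_mul_le (by norm_num)]
    nlinarith

lemma tri3_ge (n : ℕ) : n ≤ n * (3 * n + 1) / 2 := by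
  rcases Nat.eq_zero_or_pos n with h | h
  · simp [h]
  · rw [Nat.le_div_iff_mul_le (by norm_num)]
    nlinarith

lemma summable_geom_mul (hq : ‖q‖ < 1) (C : ℝ) : Summable (fun n : ℕ => C * ‖q‖ ^ n) :=
  (summable_geometric_of_lt_one (norm_nonneg q) hq).mul_left C

lemma summable_of_geom_bound (hq : ‖q‖ < 1) {f : ℕ → ℂ} {C : ℝ}
    (h : ∀ n, ‖f n‖ ≤ C * ‖q‖ ^ n) : Summable f :=
  Summable.of_norm_bounded (summable_geom_mul hq C) h

end RFT
namespace RFT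
open Finset

variable {q : ℂ}

lemma summable_U (hq : ‖q‖ < 1) {a b : ℂ} (ha : ‖a‖ ≤ ‖q‖) (hb : ‖b‖ ≤ 1) :
    Summable (fun n : ℕ => (-a) ^ n * Pp q b n) := by
  apply summable_of_geom_bound hq (C := Real.exp (1 - ‖q‖)⁻¹)
  intro n
  rw [norm_mul, norm_pow, norm_neg, mul_comm]
  exact mul_le_mul (Pp_norm_le hq hb n) (pow_le_pow_left₀ (norm_nonneg a) ha n)
    (pow_nonneg (norm_nonneg a) n) (Real.exp_nonneg _)

lemma norm_hTerm_le (hq : ‖q‖ < 1) {c : ℝ} (hc : 0 < c)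
    (hcq : ∀ (b : ℂ), ‖b‖ ≤ ‖q‖ → ∀ n, c ≤ ‖Pp q b n‖)
    {a t : ℂ} (ha : ‖a‖ ≤ 1) (ht : ‖t‖ ≤ 1) (n : ℕ) :
    ‖hTerm q a t n‖ ≤ c⁻¹ * ‖q‖ ^ n := by
  have haq : ‖a * q‖ ≤ ‖q‖ := by
    rw [norm_mul]
    nlinarith [norm_nonneg q]
  rw [hTerm, norm_div]
  have hP := hcq (a*q) haq n
  have hnum : ‖(-1:ℂ) ^ n * t ^ n * a ^ n * q ^ (n * (n + 1) / 2)‖ ≤ ‖q‖ ^ n := by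
    simp only [norm_mul, norm_pow, norm_neg, norm_one, one_pow, one_mul]
    calc ‖t‖ ^ n * ‖a‖ ^ n * ‖q‖ ^ (n * (n+1)/2)
        ≤ 1 * 1 * ‖q‖ ^ (n*(n+1)/2) := by
          apply mul_le_mul (mul_le_mul (pow_le_one₀ (norm_nonneg t) ht)
            (pow_le_one₀ (norm_nonneg a) ha) (pow_nonneg (norm_nonneg a) n) one_pos.le)
            le_rfl (pow_nonneg (norm_nonneg q) _) (by norm_num)
    _ = ‖q‖ ^ (n*(n+1)/2) := by ring
    _ ≤ ‖q‖ ^ n := pow_le_pow_of_le_one (norm_nonneg q) hq.le (tri_ge n)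
  calc ‖(-1:ℂ) ^ n * t ^ n * a ^ n * q ^ (n * (n + 1) / 2)‖ / ‖Pp q (a*q) n‖
      ≤ ‖q‖ ^ n / c := by
        apply div_le_div₀ (pow_nonneg (norm_nonneg q) n) hnum hc hP
  _ = c⁻¹ * ‖q‖ ^ n := by rw [div_eq_mul_inv, mul_comm]

lemma summable_h (hq : ‖q‖ < 1) {a t : ℂ} (ha : ‖a‖ ≤ 1) (ht : ‖t‖ ≤ 1) :
    Summable (fun n => hTerm q a t n) := by
  obtain ⟨c, hc, hcq⟩ := exists_cq hq
  exact summable_of_geom_bound hq fun n => norm_hTerm_le hq hc hcq ha ht n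

lemma norm_rhsTerm_le (hq : ‖q‖ < 1) {a : ℂ} (ha : ‖a‖ ≤ 1) (n : ℕ) :
    ‖rhsTerm q a n‖ ≤ 2 * ‖q‖ ^ n := by
  rw [rhsTerm]
  have h1 : ‖a ^ (3*n) * q ^ (n * (3*n+1)/2)‖ ≤ ‖q‖ ^ n := by
    rw [norm_mul, norm_pow, norm_pow]
    calc ‖a‖ ^ (3*n) * ‖q‖ ^ (n*(3*n+1)/2) ≤ 1 * ‖q‖ ^ (n*(3*n+1)/2) :=
          mul_le_mul_of_nonneg_right (pow_le_one₀ (norm_nonneg a) ha) (pow_nonneg (norm_nonneg q) _)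
    _ = ‖q‖ ^ (n*(3*n+1)/2) := one_mul _
    _ ≤ ‖q‖ ^ n := pow_le_pow_of_le_one (norm_nonneg q) hq.le (tri3_ge n)
  have h2 : ‖(1 : ℂ) - a ^ 2 * q ^ (2*n+1)‖ ≤ 2 := by
    calc ‖(1:ℂ) - a^2 * q^(2*n+1)‖ ≤ ‖(1:ℂ)‖ + ‖a^2 * q^(2*n+1)‖ := norm_sub_le _ _
    _ ≤ 1 + 1 := by
        rw [norm_one, norm_mul, norm_pow, norm_pow]
        nlinarith [pow_le_one₀ (norm_nonneg a) ha (n := 2), pow_le_one₀ (norm_nonneg q) hq.le (n := 2*n+1), pow_nonneg (norm_nonneg q) (2*n+1), pow_nonneg (norm_nonneg a) 2]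
    _ = 2 := by norm_num
  rw [norm_mul]
  calc ‖a ^ (3*n) * q ^ (n*(3*n+1)/2)‖ * ‖1 - a^2 * q^(2*n+1)‖
      ≤ ‖q‖ ^ n * 2 := mul_le_mul h1 h2 (norm_nonneg _) (pow_nonneg (norm_nonneg q) n)
  _ = 2 * ‖q‖ ^ n := mul_comm _ _

lemma summable_g (hq : ‖q‖ < 1) {a : ℂ} (ha : ‖a‖ ≤ 1) : Summable (rhsTerm q a) :=
  summable_of_geom_bound hq fun n => norm_rhsTerm_le hq ha n

end RFT
namespace RFT
open Finset

variable {q : ℂ}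

lemma summable_of_bound {r : ℝ} (hr0 : 0 ≤ r) (hr : r < 1) {f : ℕ → ℂ} {C : ℝ}
    (h : ∀ n, ‖f n‖ ≤ C * r ^ n) : Summable f :=
  Summable.of_norm_bounded ((summable_geometric_of_lt_one hr0 hr).mul_left C) h

lemma summable_U' (hq : ‖q‖ < 1) {a b : ℂ} (ha : ‖a‖ < 1) (hb : ‖b‖ ≤ 1) :
    Summable (fun n : ℕ => (-a) ^ n * Pp q b n) := by
  apply summable_of_bound (norm_nonneg a) ha (C := Real.exp (1 - ‖q‖)⁻¹)
  intro n
  rw [norm_mul, norm_pow, norm_neg, mul_comm]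
  exact mul_le_mul_of_nonneg_right (Pp_norm_le hq hb n) (pow_nonneg (norm_nonneg a) n)

lemma mul_q_le {a : ℂ} (ha : ‖a‖ ≤ 1) : ‖a * q‖ ≤ ‖q‖ := by
  rw [norm_mul]; nlinarith [norm_nonneg q]

lemma mul_q_le_one (hq : ‖q‖ < 1) {a : ℂ} (ha : ‖a‖ ≤ 1) : ‖a * q‖ ≤ 1 :=
  (mul_q_le ha).trans hq.le

lemma mul_q_lt (hq : ‖q‖ < 1) {a : ℂ} (ha : ‖a‖ ≤ 1) : ‖a * q‖ < 1 :=
  lt_of_le_of_lt (mul_q_le ha) hq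

lemma fac_ne (hq : ‖q‖ < 1) {a : ℂ} (ha : ‖a‖ ≤ 1) (n : ℕ) : 1 + a * q * q ^ n ≠ 0 := by
  intro h0
  have h1 : a * q * q ^ n = -1 := by linear_combination h0
  have h2 : ‖a * q * q ^ n‖ < 1 := by
    rw [norm_mul]
    calc ‖a * q‖ * ‖q ^ n‖ ≤ ‖q‖ * 1 := by
          apply mul_le_mul (mul_q_le ha) _ (norm_nonneg _) (norm_nonneg q)
          rw [norm_pow]; exact pow_le_one₀ (norm_nonneg q) hq.le
    _ = ‖q‖ := mul_one _
    _ < 1 := hq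
  rw [h1] at h2
  simp at h2

lemma Pp_zero (b : ℂ) : Pp q b 0 = 1 := by simp [Pp]

lemma Pp_succ_last (b : ℂ) (n : ℕ) : Pp q b (n + 1) = Pp q b n * (1 + b * q ^ n) := by
  rw [Pp, Finset.prod_range_succ, Pp]

lemma Pp_succ_first (b : ℂ) (n : ℕ) : Pp q b (n + 1) = (1 + b) * Pp q (b * q) n := by
  rw [Pp, Finset.prod_range_succ']
  have h1 : ∀ j ∈ range n, ((1:ℂ) + b * q ^ (j+1)) = (1 + (b*q) * q ^ j) := fun j _ => by
    rw [pow_succ]; ring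
  rw [Finset.prod_congr rfl h1, Pp]
  simp only [pow_zero, mul_one]
  ring

lemma tri_succ (n : ℕ) : (n + 1) * (n + 1 + 1) / 2 = n * (n + 1) / 2 + (n + 1) := by
  have hA : 2 ∣ n * (n + 1) := (Nat.even_mul_succ_self n).two_dvd
  have hB : 2 ∣ (n + 1) * (n + 1 + 1) := (Nat.even_mul_succ_self (n+1)).two_dvd
  apply Nat.eq_of_mul_eq_mul_left (show 0 < 2 by norm_num)
  have h2 : 2 * (n * (n + 1) / 2 + (n + 1)) = n * (n + 1) + 2 * (n + 1) := by
    rw [Nat.mul_add, Nat.mul_div_cancel' hA]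
  rw [Nat.mul_div_cancel' hB, h2]
  ring

lemma tri3_succ (n : ℕ) : (n + 1) * (3 * (n + 1) + 1) / 2 = n * (3 * n + 1) / 2 + (3 * n + 2) := by
  have e1 : ∀ m : ℕ, m * (3 * m + 1) = m * (m + 1) + 2 * (m * m) := fun m => by ring
  have hA : 2 ∣ n * (3 * n + 1) := by
    rw [e1]; exact Nat.dvd_add (Nat.even_mul_succ_self n).two_dvd ⟨n*n, rfl⟩
  have hB : 2 ∣ (n + 1) * (3 * (n + 1) + 1) := by
    rw [e1]; exact Nat.dvd_add (Nat.even_mul_succ_self (n+1)).two_dvd ⟨(n+1)*(n+1), rfl⟩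
  apply Nat.eq_of_mul_eq_mul_left (show 0 < 2 by norm_num)
  have h2 : 2 * (n * (3 * n + 1) / 2 + (3 * n + 2)) = n * (3 * n + 1) + 2 * (3 * n + 2) := by
    rw [Nat.mul_add, Nat.mul_div_cancel' hA]
  rw [Nat.mul_div_cancel' hB, h2]
  ring

end RFT
namespace RFT
open Finset

variable {q : ℂ}

lemma FEU1 (hq : ‖q‖ < 1) {a b : ℂ} (ha : ‖a‖ < 1) (hb : ‖b‖ ≤ 1) :
    Uu q a b = 1 - a * (1 + b) * Uu q a (b * q) := by
  have hbq : ‖b * q‖ ≤ 1 := mul_q_le_one hq hb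
  have hS1 := summable_U' hq ha hb
  have hS2 := summable_U' hq ha hbq
  rw [Uu, Summable.tsum_eq_zero_add hS1]
  have h0 : (-a) ^ 0 * Pp q b 0 = 1 := by simp [Pp_zero]
  have hterm : ∀ n : ℕ, (-a) ^ (n+1) * Pp q b (n+1)
      = (-(a * (1 + b))) * ((-a) ^ n * Pp q (b * q) n) := fun n => by
    rw [Pp_succ_first, pow_succ]
    ring
  rw [h0, tsum_congr hterm, tsum_mul_left]
  rw [show (∑' (n:ℕ), (-a)^n * Pp q (b*q) n) = Uu q a (b*q) from rfl]
  ring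

lemma FEU2 (hq : ‖q‖ < 1) {a b : ℂ} (ha : ‖a‖ < 1) (hb : ‖b‖ ≤ 1) :
    Uu q a b = (1 - a * b) * Uu q a (b * q) + a * b * q * Uu q (a * q) (b * q) := by
  have hbq : ‖b * q‖ ≤ 1 := mul_q_le_one hq hb
  have haq : ‖a * q‖ < 1 := mul_q_lt hq ha.le
  have hS1 := summable_U' hq ha hb
  have hS2 := summable_U' hq ha hbq
  have hS3 := summable_U' hq haq hbq
  have hd : Summable (fun n : ℕ => (-a) ^ n * Pp q b n - (-a) ^ n * Pp q (b * q) n) :=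
    hS1.sub hS2
  have hmain : Uu q a b - Uu q a (b * q)
      = -(a*b) * Uu q a (b*q) + (a*b*q) * Uu q (a*q) (b*q) := by
    rw [Uu, Uu, ← Summable.tsum_sub hS1 hS2, Summable.tsum_eq_zero_add hd]
    have h0 : (-a) ^ 0 * Pp q b 0 - (-a) ^ 0 * Pp q (b*q) 0 = 0 := by simp [Pp_zero]
    have hterm : ∀ n : ℕ,
        (-a) ^ (n+1) * Pp q b (n+1) - (-a) ^ (n+1) * Pp q (b*q) (n+1)
        = (-(a*b)) * ((-a) ^ n * Pp q (b*q) n)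
          + (a*b*q) * ((-(a*q)) ^ n * Pp q (b*q) n) := fun n => by
      rw [Pp_succ_first, Pp_succ_last]
      have hpow : (-(a*q)) ^ n = (-a) ^ n * q ^ n := by
        rw [show -(a*q) = (-a) * q by ring, mul_pow]
      rw [hpow, pow_succ]
      ring
    rw [h0, tsum_congr hterm,
      Summable.tsum_add ((hS2.mul_left _)) ((hS3.mul_left _)), tsum_mul_left, tsum_mul_left]
    rw [show (∑' (n:ℕ), (-a)^n * Pp q (b*q) n) = Uu q a (b*q) from rfl,
      show (∑' (n:ℕ), (-(a*q))^n * Pp q (b*q) n) = Uu q (a*q) (b*q) from rfl]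
    ring
  linear_combination hmain

lemma FEg (hq : ‖q‖ < 1) {a : ℂ} (ha : ‖a‖ ≤ 1) :
    Gg q a = 1 - a ^ 2 * q + a ^ 3 * q ^ 2 * Gg q (a * q) := by
  have haq : ‖a * q‖ ≤ 1 := mul_q_le_one hq ha
  have hS := summable_g hq ha
  have hS' := summable_g hq haq
  rw [Gg, Summable.tsum_eq_zero_add hS]
  have h0 : rhsTerm q a 0 = 1 - a ^ 2 * q := by
    simp [rhsTerm]
  have hterm : ∀ n : ℕ, rhsTerm q a (n+1) = (a^3 * q^2) * rhsTerm q (a*q) n := fun n => by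
    rw [rhsTerm, rhsTerm, tri3_succ]
    rw [show 3 * (n+1) = 3*n + 3 by ring, show 2 * (n+1) + 1 = (2*n+1) + 2 by ring,
      pow_add, pow_add, pow_add, mul_pow]
    ring
  rw [h0, tsum_congr hterm, tsum_mul_left, Gg]

lemma hTerm_zero (a t : ℂ) : hTerm q a t 0 = 1 := by
  simp [hTerm, Pp_zero]

lemma hTerm_succ (hq : ‖q‖ < 1) {a : ℂ} (ha : ‖a‖ ≤ 1) (t : ℂ) (n : ℕ) :
    hTerm q a t (n + 1)
      = -a * hTerm q a (t * q) (n + 1) - a * q * t * hTerm q a (t * q) n := by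
  have haq : ‖a * q‖ ≤ ‖q‖ := mul_q_le ha
  have hne : Pp q (a*q) n ≠ 0 := Pp_ne_zero hq haq n
  have hne1 : Pp q (a*q) (n+1) ≠ 0 := Pp_ne_zero hq haq (n+1)
  have hfac : (1 : ℂ) + (a*q) * q ^ n ≠ 0 := fac_ne hq ha n
  rw [hTerm, hTerm, hTerm, Pp_succ_last, tri_succ]
  rw [pow_add, pow_succ, pow_succ, pow_succ]
  field_simp
  ring
end RFT
namespace RFT
open Finset
variable {q : ℂ}

lemma FE1 (hq : ‖q‖ < 1) {a t : ℂ} (ha : ‖a‖ ≤ 1) (ht : ‖t‖ ≤ 1) :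
    Hh q a t = 1 + a - a * (1 + q * t) * Hh q a (t * q) := by
  have htq : ‖t * q‖ ≤ 1 := mul_q_le_one hq ht
  have hSt := summable_h hq ha ht
  have hStq := summable_h hq ha htq
  have hshift : Summable (fun n => hTerm q a (t*q) (n+1)) := (summable_nat_add_iff 1).2 hStq
  rw [Hh, Summable.tsum_eq_zero_add hSt, hTerm_zero]
  have hterm : ∀ n : ℕ, hTerm q a t (n+1)
      = (-a) * hTerm q a (t*q) (n+1) - (a*q*t) * hTerm q a (t*q) n := fun n => by
    rw [hTerm_succ hq ha t n]
  rw [tsum_congr hterm, Summable.tsum_sub (hshift.mul_left _) (hStq.mul_left _),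
    tsum_mul_left, tsum_mul_left]
  have h2 : ∑' n : ℕ, hTerm q a (t*q) (n+1) = Hh q a (t*q) - 1 := by
    rw [Hh, Summable.tsum_eq_zero_add hStq, hTerm_zero]; ring
  rw [h2, show (∑' n : ℕ, hTerm q a (t*q) n) = Hh q a (t*q) from rfl]
  ring

lemma pow_q_le_one (hq : ‖q‖ < 1) {a : ℂ} (ha : ‖a‖ ≤ 1) (N : ℕ) : ‖a * q ^ N‖ ≤ 1 := by
  rw [norm_mul, norm_pow]
  nlinarith [pow_le_one₀ (norm_nonneg q) hq.le (n := N), pow_nonneg (norm_nonneg q) N,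
    norm_nonneg a]

lemma h_iter (hq : ‖q‖ < 1) {a : ℂ} (ha : ‖a‖ ≤ 1) (N : ℕ) :
    Hh q a a = (1 + a) * (∑ k ∈ Finset.range N, (-a) ^ k * Pp q (a*q) k)
      + (-a) ^ N * Pp q (a*q) N * Hh q a (a * q ^ N) := by
  induction N with
  | zero => simp [Pp_zero]
  | succ N ih =>
    rw [ih, FE1 hq ha (pow_q_le_one hq ha N)]
    rw [show (a * q ^ N) * q = a * q ^ (N+1) by rw [pow_succ]; ring]
    rw [Finset.sum_range_succ, Pp_succ_last]
    ring

lemma tsum_norm_bound {f : ℕ → ℂ} {C r : ℝ} (hr0 : 0 ≤ r) (hr : r < 1)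
    (h : ∀ n, ‖f n‖ ≤ C * r ^ n) : ‖∑' n, f n‖ ≤ C * (1 - r)⁻¹ := by
  have hg : Summable (fun n : ℕ => C * r ^ n) := (summable_geometric_of_lt_one hr0 hr).mul_left C
  have hs : Summable (fun n => ‖f n‖) := Summable.of_nonneg_of_le (fun n => norm_nonneg _) h hg
  calc ‖∑' n, f n‖ ≤ ∑' n, ‖f n‖ := norm_tsum_le_tsum_norm hs
  _ ≤ ∑' n : ℕ, C * r ^ n := Summable.tsum_le_tsum h hs hg
  _ = C * (1 - r)⁻¹ := by rw [tsum_mul_left, tsum_geometric_of_lt_one hr0 hr]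

lemma Hh_norm_le (hq : ‖q‖ < 1) {c : ℝ} (hc : 0 < c)
    (hcq : ∀ (b : ℂ), ‖b‖ ≤ ‖q‖ → ∀ n, c ≤ ‖Pp q b n‖)
    {a t : ℂ} (ha : ‖a‖ ≤ 1) (ht : ‖t‖ ≤ 1) :
    ‖Hh q a t‖ ≤ c⁻¹ * (1 - ‖q‖)⁻¹ :=
  tsum_norm_bound (norm_nonneg q) hq (fun n => norm_hTerm_le hq hc hcq ha ht n)

lemma interiorA (hq : ‖q‖ < 1) {a : ℂ} (ha : ‖a‖ < 1) :
    Hh q a a = (1 + a) * Uu q a (a * q) := by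
  have haq : ‖a * q‖ ≤ 1 := mul_q_le_one hq ha.le
  have hU := summable_U' hq ha haq
  obtain ⟨c, hc, hcq⟩ := exists_cq hq
  have h1 : Filter.Tendsto (fun N => (1 + a) * ∑ k ∈ Finset.range N, (-a) ^ k * Pp q (a*q) k)
      Filter.atTop (nhds ((1 + a) * Uu q a (a * q))) :=
    (hU.hasSum.tendsto_sum_nat).const_mul (1 + a)
  have h2 : Filter.Tendsto (fun N => (-a) ^ N * Pp q (a*q) N * Hh q a (a * q ^ N))
      Filter.atTop (nhds 0) := by
    have hgt : Filter.Tendsto (fun N : ℕ => Real.exp (1 - ‖q‖)⁻¹ * (c⁻¹ * (1 - ‖q‖)⁻¹) * ‖a‖ ^ N)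
        Filter.atTop (nhds 0) := by
      have := (tendsto_pow_atTop_nhds_zero_of_lt_one (norm_nonneg a) ha).const_mul
        (Real.exp (1 - ‖q‖)⁻¹ * (c⁻¹ * (1 - ‖q‖)⁻¹))
      simpa using this
    apply squeeze_zero_norm _ hgt
    · intro N
      rw [norm_mul, norm_mul, norm_pow, norm_neg]
      calc ‖a‖ ^ N * ‖Pp q (a*q) N‖ * ‖Hh q a (a * q ^ N)‖
          ≤ ‖a‖ ^ N * Real.exp (1 - ‖q‖)⁻¹ * (c⁻¹ * (1 - ‖q‖)⁻¹) := by
            apply mul_le_mul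
            · exact mul_le_mul_of_nonneg_left (Pp_norm_le hq haq N) (pow_nonneg (norm_nonneg a) N)
            · exact Hh_norm_le hq hc hcq ha.le (pow_q_le_one hq ha.le N)
            · exact norm_nonneg _
            · positivity
      _ = Real.exp (1 - ‖q‖)⁻¹ * (c⁻¹ * (1 - ‖q‖)⁻¹) * ‖a‖ ^ N := by ring
  have h3 := h1.add h2
  rw [add_zero] at h3
  have h4 : (fun N => (1 + a) * ∑ k ∈ Finset.range N, (-a) ^ k * Pp q (a*q) k
      + (-a) ^ N * Pp q (a*q) N * Hh q a (a * q ^ N)) = fun _ => Hh q a a :=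
    funext fun N => (h_iter hq ha.le N).symm
  rw [h4] at h3
  exact tendsto_nhds_unique tendsto_const_nhds h3

end RFT
namespace RFT
open Finset

variable {q : ℂ}

noncomputable def lhsTerm (q a : ℂ) (n : ℕ) : ℂ :=
  (-1) ^ n * a ^ (2 * n) * q ^ (n * (n + 1) / 2) / ∏ j ∈ Finset.range n, (1 + a * q ^ (j + 1))

noncomputable def Ff (q a : ℂ) : ℂ := ∑' n : ℕ, lhsTerm q a n

lemma lhsTerm_eq_hTerm (a : ℂ) (n : ℕ) : lhsTerm q a n = hTerm q a a n := by
  rw [lhsTerm, hTerm]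
  congr 1
  · rw [two_mul, pow_add]; ring
  · rw [Pp]
    exact Finset.prod_congr rfl fun j _ => by rw [pow_succ]; ring

lemma Ff_eq_Hh (a : ℂ) : Ff q a = Hh q a a := tsum_congr (lhsTerm_eq_hTerm a)

lemma FEstar (hq : ‖q‖ < 1) {a : ℂ} (ha : ‖a‖ < 1) :
    (1 + a) * Uu q a (a * q)
      = 1 - a ^ 2 * q + a ^ 3 * q ^ 2 * ((1 + a * q) * Uu q (a * q) ((a * q) * q)) := by
  have haq1 : ‖a * q‖ ≤ 1 := mul_q_le_one hq ha.le
  have e1 := FEU1 hq ha haq1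
  have e2 := FEU2 hq ha haq1
  linear_combination (1 - a^2*q) * e1 + (a * (1 + a*q)) * e2

lemma D_succ (hq : ‖q‖ < 1) {a : ℂ} (ha : ‖a‖ < 1) :
    Ff q a - Gg q a = a ^ 3 * q ^ 2 * (Ff q (a * q) - Gg q (a * q)) := by
  have haq : ‖a * q‖ < 1 := mul_q_lt hq ha.le
  have h1 : Ff q a = (1 + a) * Uu q a (a * q) := (Ff_eq_Hh a).trans (interiorA hq ha)
  have h2 : Ff q (a * q) = (1 + a * q) * Uu q (a * q) ((a * q) * q) :=
    (Ff_eq_Hh (a*q)).trans (interiorA hq haq)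
  rw [h1, h2, FEstar hq ha, FEg hq ha.le]
  ring

lemma D_iter (hq : ‖q‖ < 1) {a : ℂ} (ha : ‖a‖ < 1) (N : ℕ) :
    Ff q a - Gg q a = (∏ k ∈ Finset.range N, ((a * q ^ k) ^ 3 * q ^ 2))
      * (Ff q (a * q ^ N) - Gg q (a * q ^ N)) := by
  induction N with
  | zero => simp
  | succ N ih =>
    have haN : ‖a * q ^ N‖ < 1 := by
      calc ‖a * q ^ N‖ ≤ ‖a‖ * 1 := by
            rw [norm_mul, norm_pow]
            exact mul_le_mul_of_nonneg_left (pow_le_one₀ (norm_nonneg q) hq.le) (norm_nonneg a)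
      _ = ‖a‖ := mul_one _
      _ < 1 := ha
    rw [ih, D_succ hq haN, show (a * q ^ N) * q = a * q ^ (N+1) by rw [pow_succ]; ring,
      Finset.prod_range_succ]
    ring

lemma Ff_norm_le (hq : ‖q‖ < 1) {c : ℝ} (hc : 0 < c)
    (hcq : ∀ (b : ℂ), ‖b‖ ≤ ‖q‖ → ∀ n, c ≤ ‖Pp q b n‖)
    {a : ℂ} (ha : ‖a‖ ≤ 1) : ‖Ff q a‖ ≤ c⁻¹ * (1 - ‖q‖)⁻¹ := by
  rw [Ff_eq_Hh]
  exact Hh_norm_le hq hc hcq ha ha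

lemma Gg_norm_le (hq : ‖q‖ < 1) {a : ℂ} (ha : ‖a‖ ≤ 1) : ‖Gg q a‖ ≤ 2 * (1 - ‖q‖)⁻¹ :=
  tsum_norm_bound (norm_nonneg q) hq (fun n => norm_rhsTerm_le hq ha n)

lemma interior_eq (hq : ‖q‖ < 1) {a : ℂ} (ha : ‖a‖ < 1) : Ff q a = Gg q a := by
  obtain ⟨c, hc, hcq⟩ := exists_cq hq
  set M : ℝ := c⁻¹ * (1 - ‖q‖)⁻¹ + 2 * (1 - ‖q‖)⁻¹ with hM
  have hbound : ∀ N : ℕ, ‖Ff q a - Gg q a‖ ≤ M * (‖q‖ ^ 2) ^ N := by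
    intro N
    rw [D_iter hq ha N, norm_mul]
    have h1 : ‖∏ k ∈ Finset.range N, ((a * q ^ k) ^ 3 * q ^ 2)‖ ≤ (‖q‖ ^ 2) ^ N := by
      rw [norm_prod]
      calc ∏ k ∈ Finset.range N, ‖(a * q ^ k) ^ 3 * q ^ 2‖
          ≤ ∏ _k ∈ Finset.range N, ‖q‖ ^ 2 := by
            apply Finset.prod_le_prod (fun k _ => norm_nonneg _)
            intro k _
            rw [norm_mul, norm_pow, norm_pow]
            nlinarith [pow_le_one₀ (norm_nonneg (a * q^k)) (pow_q_le_one hq ha.le k) (n := 3),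
              pow_nonneg (norm_nonneg (a * q ^ k)) 3, pow_nonneg (norm_nonneg q) 2]
      _ = (‖q‖ ^ 2) ^ N := by rw [Finset.prod_const, Finset.card_range]
    have haN : ‖a * q ^ N‖ ≤ 1 := pow_q_le_one hq ha.le N
    have h2 : ‖Ff q (a * q ^ N) - Gg q (a * q ^ N)‖ ≤ M := by
      calc ‖Ff q (a * q ^ N) - Gg q (a * q ^ N)‖
          ≤ ‖Ff q (a * q ^ N)‖ + ‖Gg q (a * q ^ N)‖ := norm_sub_le _ _
      _ ≤ M := add_le_add (Ff_norm_le hq hc hcq haN) (Gg_norm_le hq haN)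
    calc ‖∏ k ∈ Finset.range N, ((a * q ^ k) ^ 3 * q ^ 2)‖ * ‖Ff q (a * q ^ N) - Gg q (a * q ^ N)‖
        ≤ (‖q‖ ^ 2) ^ N * M :=
          mul_le_mul h1 h2 (norm_nonneg _) (pow_nonneg (pow_nonneg (norm_nonneg q) 2) N)
    _ = M * (‖q‖ ^ 2) ^ N := mul_comm _ _
  have hq2 : ‖q‖ ^ 2 < 1 := by nlinarith [norm_nonneg q]
  have htend : Filter.Tendsto (fun N : ℕ => M * (‖q‖ ^ 2) ^ N) Filter.atTop (nhds 0) := by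
    have := (tendsto_pow_atTop_nhds_zero_of_lt_one (by positivity) hq2).const_mul M
    simpa using this
  have hle : ‖Ff q a - Gg q a‖ ≤ 0 :=
    ge_of_tendsto htend (Filter.Eventually.of_forall hbound)
  have : Ff q a - Gg q a = 0 := by
    have := norm_nonneg (Ff q a - Gg q a)
    have h0 : ‖Ff q a - Gg q a‖ = 0 := le_antisymm hle this
    exact norm_eq_zero.mp h0
  linear_combination this
end RFT
namespace RFT
open Finset Filter Metric

variable {q : ℂ}

lemma denom_eq (x : ℂ) (n : ℕ) :
    ∏ j ∈ Finset.range n, (1 + x * q ^ (j + 1)) = Pp q (x * q) n := by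
  rw [Pp]
  exact Finset.prod_congr rfl fun j _ => by rw [pow_succ]; ring

lemma contF (hq : ‖q‖ < 1) : ContinuousOn (Ff q) (Metric.closedBall 0 1) := by
  obtain ⟨c, hc, hcq⟩ := exists_cq hq
  have hu : Summable (fun n : ℕ => c⁻¹ * ‖q‖ ^ n) :=
    (summable_geometric_of_lt_one (norm_nonneg q) hq).mul_left _
  have hfu : ∀ (n : ℕ) (x : ℂ), x ∈ Metric.closedBall (0:ℂ) 1 →
      ‖lhsTerm q x n‖ ≤ c⁻¹ * ‖q‖ ^ n := by
    intro n x hx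
    rw [Metric.mem_closedBall, dist_zero_right] at hx
    rw [lhsTerm_eq_hTerm]
    exact norm_hTerm_le hq hc hcq hx hx n
  have huc := tendstoUniformlyOn_tsum hu hfu
  apply huc.continuousOn
  refine (Filter.Eventually.of_forall fun N => ?_).frequently
  apply continuousOn_finset_sum
  intro n _
  rw [show (fun x => lhsTerm q x n)
    = fun x : ℂ => (-1:ℂ) ^ n * x ^ (2*n) * q ^ (n*(n+1)/2)
        / ∏ j ∈ Finset.range n, (1 + x * q ^ (j+1)) from rfl]
  apply ContinuousOn.div
  · exact ((continuous_const.mul (continuous_pow (2*n))).mul continuous_const).continuousOn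
  · exact (continuous_finset_prod _ fun j _ =>
      continuous_const.add (continuous_id.mul continuous_const)).continuousOn
  · intro x hx
    rw [Metric.mem_closedBall, dist_zero_right] at hx
    rw [denom_eq]
    exact Pp_ne_zero hq (mul_q_le hx) n

lemma contG (hq : ‖q‖ < 1) : ContinuousOn (Gg q) (Metric.closedBall 0 1) := by
  have hu : Summable (fun n : ℕ => 2 * ‖q‖ ^ n) :=
    (summable_geometric_of_lt_one (norm_nonneg q) hq).mul_left _
  have hfu : ∀ (n : ℕ) (x : ℂ), x ∈ Metric.closedBall (0:ℂ) 1 →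
      ‖rhsTerm q x n‖ ≤ 2 * ‖q‖ ^ n := by
    intro n x hx
    rw [Metric.mem_closedBall, dist_zero_right] at hx
    exact norm_rhsTerm_le hq hx n
  have huc := tendstoUniformlyOn_tsum hu hfu
  apply huc.continuousOn
  refine (Filter.Eventually.of_forall fun N => ?_).frequently
  apply continuousOn_finset_sum
  intro n _
  rw [show (fun x => rhsTerm q x n)
    = fun x : ℂ => x ^ (3*n) * q ^ (n*(3*n+1)/2) * (1 - x ^ 2 * q ^ (2*n+1)) from rfl]
  fun_prop

lemma main_eq (hq : ‖q‖ < 1) {a : ℂ} (ha : ‖a‖ ≤ 1) : Ff q a = Gg q a := by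
  rcases lt_or_eq_of_le ha with h | h
  · exact interior_eq hq h
  · -- boundary
    set x : ℕ → ℂ := fun k => ((1 - 1/((k:ℝ)+1) : ℝ) : ℂ) * a with hxdef
    have hxnorm : ∀ k, ‖x k‖ < 1 := by
      intro k
      have h1 : (0:ℝ) < 1/((k:ℝ)+1) := by positivity
      have h2 : 1/((k:ℝ)+1) ≤ 1 := by
        rw [div_le_one (by positivity)]
        simp
      have habs : |1 - 1/((k:ℝ)+1)| = 1 - 1/((k:ℝ)+1) := abs_of_nonneg (by linarith)
      calc ‖x k‖ = |1 - 1/((k:ℝ)+1)| * ‖a‖ := by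
            rw [hxdef]; rw [norm_mul, Complex.norm_real, Real.norm_eq_abs]
      _ ≤ (1 - 1/((k:ℝ)+1)) * 1 := by
            rw [habs]; exact mul_le_mul_of_nonneg_left ha (by linarith)
      _ < 1 := by linarith
    have hxmem : ∀ k, x k ∈ Metric.closedBall (0:ℂ) 1 := fun k => by
      rw [Metric.mem_closedBall, dist_zero_right]
      exact (hxnorm k).le
    have hamem : a ∈ Metric.closedBall (0:ℂ) 1 := by
      rw [Metric.mem_closedBall, dist_zero_right]; exact ha
    have hxt : Tendsto x atTop (nhds a) := by
      have h0 : Tendsto (fun k : ℕ => (1 - 1/((k:ℝ)+1) : ℝ)) atTop (nhds 1) := by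
        have := tendsto_one_div_add_atTop_nhds_zero_nat (𝕜 := ℝ)
        have h2 := (tendsto_const_nhds (x := (1:ℝ)) (f := atTop)).sub this
        simpa using h2
      have h1 : Tendsto (fun k : ℕ => ((1 - 1/((k:ℝ)+1) : ℝ) : ℂ)) atTop (nhds (1:ℂ)) := by
        have := (Complex.continuous_ofReal.tendsto 1).comp h0
        simpa [Function.comp_def] using this
      have h2 := h1.mul_const a
      rw [one_mul] at h2
      exact h2
    have hxt' : Tendsto x atTop (nhdsWithin a (Metric.closedBall (0:ℂ) 1)) := by
      rw [tendsto_nhdsWithin_iff]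
      exact ⟨hxt, Filter.Eventually.of_forall hxmem⟩
    have hFa : Tendsto (fun k => Ff q (x k)) atTop (nhds (Ff q a)) :=
      ((contF hq a hamem).tendsto).comp hxt'
    have hGa : Tendsto (fun k => Gg q (x k)) atTop (nhds (Gg q a)) :=
      ((contG hq a hamem).tendsto).comp hxt'
    have heq : (fun k => Ff q (x k)) = fun k => Gg q (x k) :=
      funext fun k => interior_eq hq (hxnorm k)
    rw [heq] at hFa
    exact tendsto_nhds_unique hFa hGa

end RFT

/-- Ramanujan's false theta identity: for `‖q‖ < 1` and `‖a‖ ≤ 1`,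
`∑_{n=0}^∞ (-1)^n a^{2n} q^{n(n+1)/2} / (-aq;q)_n
  = ∑_{n=0}^∞ a^{3n} q^{n(3n+1)/2} (1 - a² q^{2n+1})`. -/
theorem ramanujan_false_theta (q a : ℂ) (hq : ‖q‖ < 1) (ha : ‖a‖ ≤ 1) :
    (∑' n : ℕ, (-1 : ℂ) ^ n * a ^ (2 * n) * q ^ (n * (n + 1) / 2) /
        ∏ j ∈ Finset.range n, (1 + a * q ^ (j + 1))) =
      ∑' n : ℕ, a ^ (3 * n) * q ^ (n * (3 * n + 1) / 2) * (1 - a ^ 2 * q ^ (2 * n + 1)) := by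
  have h := RFT.main_eq hq ha
  simp only [RFT.Ff, RFT.lhsTerm, RFT.Gg, RFT.rhsTerm] at h
  exact h
end
end

section
/- For |q|<1, ∑_{n=1}^∞ n q^n (q^{n+1};q)_∞ = ∑_{n=1}^∞ q^n/(1−q^n). -/
open Finset Filter

noncomputable def Qp (q : ℂ) (n : ℕ) : ℂ := ∏ j ∈ Finset.range n, (1 - q ^ (j+1))

lemma Qp_succ (q : ℂ) (n : ℕ) : Qp q (n+1) = Qp q n * (1 - q ^ (n+1)) :=
  Finset.prod_range_succ _ _

lemma norm_pow_lt (q : ℂ) (hq : ‖q‖ < 1) {m : ℕ} (hm : m ≠ 0) : ‖q ^ m‖ < 1 := by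
  rw [norm_pow]; exact pow_lt_one₀ (norm_nonneg q) hq hm

lemma one_sub_pow_ne (q : ℂ) (hq : ‖q‖ < 1) {m : ℕ} (hm : m ≠ 0) : 1 - q ^ m ≠ 0 := by
  intro h
  have h1 : q ^ m = 1 := by linear_combination -h
  have h2 := norm_pow_lt q hq hm
  rw [h1, norm_one] at h2; exact lt_irrefl 1 h2

/-- `1 - ∑ ≤ ∏ (1 - ·)` for values in `[0,1]`. -/

lemma one_sub_sum_le_prod (a : ℕ → ℝ) (h0 : ∀ j, 0 ≤ a j) (h1 : ∀ j, a j ≤ 1)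
    (s : Finset ℕ) : 1 - ∑ j ∈ s, a j ≤ ∏ j ∈ s, (1 - a j) := by
  classical
  induction s using Finset.induction with
  | empty => simp
  | @insert i s hx ih =>
    rw [Finset.sum_insert hx, Finset.prod_insert hx]
    have hnn : (0:ℝ) ≤ 1 - a i := by linarith [h1 i]
    nlinarith [Finset.sum_nonneg (fun j (_ : j ∈ s) => h0 j), h0 i, ih]

lemma Qp_norm_lower (q : ℂ) (hq : ‖q‖ < 1) :
    ∃ c : ℝ, 0 < c ∧ ∀ n, c ≤ ∏ j ∈ Finset.range n, (1 - ‖q‖ ^ (j+1)) := by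
  set r := ‖q‖ with hr
  have hr0 : 0 ≤ r := norm_nonneg q
  have hr1 : (0:ℝ) < 1 - r := by linarith
  have hpow1 : ∀ j : ℕ, r ^ (j+1) ≤ 1 := fun j => pow_le_one₀ hr0 hq.le
  have hpow0 : ∀ j : ℕ, (0:ℝ) ≤ r ^ (j+1) := fun j => pow_nonneg hr0 _
  have hfac0' : ∀ j : ℕ, (0:ℝ) < 1 - r ^ (j+1) := fun j => by
    have h := pow_lt_one₀ hr0 hq (Nat.succ_ne_zero j)
    simpa using sub_pos.mpr h
  have hfac0 : ∀ j : ℕ, (0:ℝ) ≤ 1 - r ^ (j+1) := fun j => (hfac0' j).le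
  obtain ⟨K, hK⟩ : ∃ K : ℕ, r ^ (K+1) ≤ (1-r)/2 := by
    have h := tendsto_pow_atTop_nhds_zero_of_lt_one hr0 hq
    obtain ⟨N, hN⟩ := (h.eventually_le_const (show (0:ℝ) < (1-r)/2 by linarith)).exists
    exact ⟨N, by calc r ^ (N+1) ≤ r ^ N := pow_le_pow_of_le_one hr0 hq.le (Nat.le_succ N)
                 _ ≤ (1-r)/2 := hN⟩
  set P : ℕ → ℝ := fun n => ∏ j ∈ Finset.range n, (1 - r ^ (j+1)) with hP
  have hPpos : ∀ n, 0 < P n := fun n => Finset.prod_pos (fun j _ => hfac0' j)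
  refine ⟨P K * (1/2), mul_pos (hPpos K) one_half_pos, fun n => ?_⟩
  show P K * (1/2) ≤ P n
  rcases le_or_gt n K with h | h
  · have hsplit : P K = P n * ∏ j ∈ Finset.Ico n K, (1 - r ^ (j+1)) :=
      (Finset.prod_range_mul_prod_Ico _ h).symm
    have h1 : ∏ j ∈ Finset.Ico n K, (1 - r ^ (j+1)) ≤ 1 :=
      Finset.prod_le_one (fun j _ => hfac0 j) (fun j _ => by linarith [hpow0 j])
    nlinarith [hPpos n, hPpos K]
  · have hsplit : P n = P K * ∏ j ∈ Finset.Ico K n, (1 - r ^ (j+1)) :=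
      (Finset.prod_range_mul_prod_Ico _ h.le).symm
    have hsum : ∑ j ∈ Finset.Ico K n, r ^ (j+1) ≤ 1/2 := by
      rw [Finset.sum_Ico_eq_sum_range]
      have he : ∀ i ∈ Finset.range (n - K), r ^ (K + i + 1) = r ^ (K+1) * r ^ i := fun i _ => by ring
      rw [Finset.sum_congr rfl he, ← Finset.mul_sum]
      have hg : ∑ i ∈ Finset.range (n-K), r ^ i ≤ (1-r)⁻¹ :=
        (Summable.sum_le_tsum _ (fun i _ => by positivity) (summable_geometric_of_lt_one hr0 hq)).trans
          (le_of_eq (tsum_geometric_of_lt_one hr0 hq))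
      calc r ^ (K+1) * ∑ i ∈ Finset.range (n-K), r ^ i ≤ ((1-r)/2) * (1-r)⁻¹ :=
              mul_le_mul hK hg (Finset.sum_nonneg fun i _ => by positivity) (by positivity)
        _ = 1/2 := by field_simp
    have hbig : (1:ℝ)/2 ≤ ∏ j ∈ Finset.Ico K n, (1 - r ^ (j+1)) := by
      have := one_sub_sum_le_prod (fun j => r ^ (j+1)) hpow0 hpow1 (Finset.Ico K n)
      linarith
    rw [hsplit]
    nlinarith [hPpos K]

lemma Qp_norm_lower' (q : ℂ) (hq : ‖q‖ < 1) :
    ∃ c : ℝ, 0 < c ∧ ∀ n, c ≤ ‖Qp q n‖ := by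
  obtain ⟨c, hc, hcn⟩ := Qp_norm_lower q hq
  refine ⟨c, hc, fun n => (hcn n).trans ?_⟩
  rw [Qp, norm_prod]
  apply Finset.prod_le_prod
  · intro j _
    have : ‖q‖ ^ (j+1) ≤ 1 := pow_le_one₀ (norm_nonneg q) hq.le
    linarith
  · intro j _
    calc 1 - ‖q‖ ^ (j+1) = ‖(1:ℂ)‖ - ‖q ^ (j+1)‖ := by rw [norm_one, norm_pow]
      _ ≤ ‖1 - q ^ (j+1)‖ := norm_sub_norm_le _ _

lemma summable_E (q : ℂ) (hq : ‖q‖ < 1) {m : ℕ} (hm : m ≠ 0) :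
    Summable (fun n : ℕ => q ^ (m*n) / Qp q n) := by
  obtain ⟨c, hc, hcn⟩ := Qp_norm_lower' q hq
  apply Summable.of_norm_bounded (g := fun n => c⁻¹ * ‖q‖ ^ n)
  · exact (summable_geometric_of_lt_one (norm_nonneg q) hq).mul_left _
  · intro n
    rw [norm_div, norm_pow]
    have h1 : ‖q‖ ^ (m*n) ≤ ‖q‖ ^ n :=
      pow_le_pow_of_le_one (norm_nonneg q) hq.le (Nat.le_mul_of_pos_left n (Nat.pos_of_ne_zero hm))
    have h2 : c ≤ ‖Qp q n‖ := hcn n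
    have h3 : (0:ℝ) < ‖Qp q n‖ := lt_of_lt_of_le hc h2
    rw [div_le_iff₀ h3]
    calc ‖q‖ ^ (m*n) ≤ ‖q‖ ^ n := h1
      _ = c⁻¹ * ‖q‖ ^ n * c := by field_simp
      _ ≤ c⁻¹ * ‖q‖ ^ n * ‖Qp q n‖ := by
          apply mul_le_mul_of_nonneg_left h2 (by positivity)

lemma summable_D (q : ℂ) (hq : ‖q‖ < 1) {m : ℕ} (hm : m ≠ 0) :
    Summable (fun n : ℕ => (n : ℂ) * q ^ (m*n) / Qp q n) := by
  obtain ⟨c, hc, hcn⟩ := Qp_norm_lower' q hq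
  have hg0 : Summable (fun n : ℕ => (n:ℝ) * ‖q‖ ^ n) := by
    have h := summable_pow_mul_geometric_of_norm_lt_one (R := ℝ) 1 (by
      rwa [Real.norm_eq_abs, abs_of_nonneg (norm_nonneg q)])
    exact h.congr (fun n => by simp [pow_one])
  apply Summable.of_norm_bounded (g := fun n : ℕ => c⁻¹ * ((n:ℝ) * ‖q‖ ^ n)) (hg0.mul_left _)
  intro n
  rw [norm_div, norm_mul, norm_pow, Complex.norm_natCast]
  have h1 : ‖q‖ ^ (m*n) ≤ ‖q‖ ^ n :=
    pow_le_pow_of_le_one (norm_nonneg q) hq.le (Nat.le_mul_of_pos_left n (Nat.pos_of_ne_zero hm))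
  have h2 : c ≤ ‖Qp q n‖ := hcn n
  have h3 : (0:ℝ) < ‖Qp q n‖ := lt_of_lt_of_le hc h2
  rw [div_le_iff₀ h3]
  calc (n:ℝ) * ‖q‖ ^ (m*n) ≤ n * ‖q‖ ^ n := by
        apply mul_le_mul_of_nonneg_left h1 (Nat.cast_nonneg n)
    _ = c⁻¹ * (n * ‖q‖ ^ n) * c := by field_simp
    _ ≤ c⁻¹ * (n * ‖q‖ ^ n) * ‖Qp q n‖ := by
        apply mul_le_mul_of_nonneg_left h2 (by positivity)

lemma Qp_ne_zero (q : ℂ) (hq : ‖q‖ < 1) (n : ℕ) : Qp q n ≠ 0 :=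
  Finset.prod_ne_zero_iff.mpr (fun j _ => one_sub_pow_ne q hq (Nat.succ_ne_zero j))

noncomputable def Ee (q : ℂ) (m : ℕ) : ℂ := ∑' n : ℕ, q ^ (m*n) / Qp q n

noncomputable def Dd (q : ℂ) (m : ℕ) : ℂ := ∑' n : ℕ, (n:ℂ) * q ^ (m*n) / Qp q n

lemma Ee_rec (q : ℂ) (hq : ‖q‖ < 1) {m : ℕ} (hm : m ≠ 0) :
    Ee q (m+1) = (1 - q ^ m) * Ee q m := by
  have hsm := summable_E q hq hm
  have hsm1 := summable_E q hq (m := m+1) (Nat.succ_ne_zero m)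
  have key : Ee q m - Ee q (m+1) = q ^ m * Ee q m := by
    rw [Ee, Ee, ← Summable.tsum_sub hsm hsm1]
    have hsub : Summable (fun n : ℕ => q ^ (m*n) / Qp q n - q ^ ((m+1)*n) / Qp q n) :=
      hsm.sub hsm1
    rw [Summable.tsum_eq_zero_add hsub]
    have h0 : q ^ (m*0) / Qp q 0 - q ^ ((m+1)*0) / Qp q 0 = 0 := by simp [Qp]
    rw [h0, zero_add]
    have hterm : ∀ n : ℕ, q ^ (m*(n+1)) / Qp q (n+1) - q ^ ((m+1)*(n+1)) / Qp q (n+1)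
        = q ^ m * (q ^ (m*n) / Qp q n) := by
      intro n
      rw [Qp_succ]
      have h1 : Qp q n ≠ 0 := Qp_ne_zero q hq n
      have h2 : (1 : ℂ) - q ^ (n+1) ≠ 0 := one_sub_pow_ne q hq (Nat.succ_ne_zero n)
      field_simp
      ring
    rw [tsum_congr hterm, tsum_mul_left]
  linear_combination -key

lemma Dd_rec (q : ℂ) (hq : ‖q‖ < 1) {m : ℕ} (hm : m ≠ 0) :
    Dd q (m+1) = (1 - q ^ m) * Dd q m - q ^ m * Ee q m := by
  have hsm := summable_D q hq hm
  have hsm1 := summable_D q hq (m := m+1) (Nat.succ_ne_zero m)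
  have hse := summable_E q hq hm
  have key : Dd q m - Dd q (m+1) = q ^ m * (Dd q m + Ee q m) := by
    rw [Dd, Dd, ← Summable.tsum_sub hsm hsm1]
    have hsub : Summable (fun n : ℕ =>
        (n:ℂ) * q ^ (m*n) / Qp q n - (n:ℂ) * q ^ ((m+1)*n) / Qp q n) := hsm.sub hsm1
    rw [Summable.tsum_eq_zero_add hsub]
    have h0 : (0:ℂ) * q ^ (m*0) / Qp q 0 - (0:ℂ) * q ^ ((m+1)*0) / Qp q 0 = 0 := by simp
    simp only [Nat.cast_zero, h0, zero_add]
    have hterm : ∀ n : ℕ, ((n:ℂ)+1) * q ^ (m*(n+1)) / Qp q (n+1)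
        - ((n:ℂ)+1) * q ^ ((m+1)*(n+1)) / Qp q (n+1)
        = q ^ m * ((n:ℂ) * q ^ (m*n) / Qp q n + q ^ (m*n) / Qp q n) := by
      intro n
      rw [Qp_succ]
      have h1 : Qp q n ≠ 0 := Qp_ne_zero q hq n
      have h2 : (1 : ℂ) - q ^ (n+1) ≠ 0 := one_sub_pow_ne q hq (Nat.succ_ne_zero n)
      field_simp
      ring
    have : ∀ n : ℕ, ((n+1 : ℕ):ℂ) * q ^ (m*(n+1)) / Qp q (n+1)
        - ((n+1 : ℕ):ℂ) * q ^ ((m+1)*(n+1)) / Qp q (n+1)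
        = q ^ m * ((n:ℂ) * q ^ (m*n) / Qp q n + q ^ (m*n) / Qp q n) := by
      intro n; rw [Nat.cast_add, Nat.cast_one]; exact hterm n
    rw [tsum_congr this, tsum_mul_left, Summable.tsum_add hsm hse, Ee]
  linear_combination -key

lemma Ee_tendsto (q : ℂ) (hq : ‖q‖ < 1) :
    Tendsto (fun m => Ee q m) atTop (nhds 1) := by
  obtain ⟨c, hc, hcn⟩ := Qp_norm_lower' q hq
  have hr0 : (0:ℝ) ≤ ‖q‖ := norm_nonneg q
  have hQ0 : Qp q 0 = 1 := by simp [Qp]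
  rw [← tendsto_sub_nhds_zero_iff]
  apply squeeze_zero_norm' (a := fun m : ℕ => (c⁻¹ * (1 - ‖q‖)⁻¹) * ‖q‖ ^ m)
  · filter_upwards [eventually_ge_atTop 1] with m hm
    have hsm := summable_E q hq (Nat.one_le_iff_ne_zero.mp hm)
    have hEm : Ee q m - 1 = ∑' n : ℕ, q ^ (m*(n+1)) / Qp q (n+1) := by
      rw [Ee, Summable.tsum_eq_zero_add hsm]
      simp [hQ0]
    rw [hEm]
    have hb : ∀ n : ℕ, ‖q ^ (m*(n+1)) / Qp q (n+1)‖ ≤ (c⁻¹ * ‖q‖ ^ m) * ‖q‖ ^ n := by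
      intro n
      rw [norm_div, norm_pow]
      have h3 : (0:ℝ) < ‖Qp q (n+1)‖ := lt_of_lt_of_le hc (hcn _)
      rw [div_le_iff₀ h3]
      have h1 : ‖q‖ ^ (m*(n+1)) ≤ ‖q‖ ^ (m+n) := by
        apply pow_le_pow_of_le_one hr0 hq.le
        calc m + n ≤ m + m * n := by
              have : n ≤ m * n := Nat.le_mul_of_pos_left n (by omega)
              omega
          _ = m * (n+1) := by ring
      calc ‖q‖ ^ (m*(n+1)) ≤ ‖q‖ ^ (m+n) := h1
        _ = (c⁻¹ * ‖q‖ ^ m) * ‖q‖ ^ n * c := by rw [pow_add]; field_simp <;> ring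
        _ ≤ (c⁻¹ * ‖q‖ ^ m) * ‖q‖ ^ n * ‖Qp q (n+1)‖ := by
            apply mul_le_mul_of_nonneg_left (hcn _) (by positivity)
    calc ‖∑' n : ℕ, q ^ (m*(n+1)) / Qp q (n+1)‖
        ≤ ∑' n : ℕ, (c⁻¹ * ‖q‖ ^ m) * ‖q‖ ^ n := by
          apply tsum_of_norm_bounded _ hb
          exact ((summable_geometric_of_lt_one hr0 hq).mul_left _).hasSum
      _ = (c⁻¹ * ‖q‖ ^ m) * (1 - ‖q‖)⁻¹ := by
          rw [tsum_mul_left, tsum_geometric_of_lt_one hr0 hq]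
      _ = (c⁻¹ * (1 - ‖q‖)⁻¹) * ‖q‖ ^ m := by ring
  · have := tendsto_pow_atTop_nhds_zero_of_lt_one hr0 hq
    simpa using this.const_mul (c⁻¹ * (1 - ‖q‖)⁻¹)

lemma Dd_tendsto (q : ℂ) (hq : ‖q‖ < 1) :
    Tendsto (fun m => Dd q m) atTop (nhds 0) := by
  obtain ⟨c, hc, hcn⟩ := Qp_norm_lower' q hq
  have hr0 : (0:ℝ) ≤ ‖q‖ := norm_nonneg q
  have hg0 : Summable (fun n : ℕ => (n:ℝ) * ‖q‖ ^ n) := by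
    have h := summable_pow_mul_geometric_of_norm_lt_one (R := ℝ) 1 (by
      rwa [Real.norm_eq_abs, abs_of_nonneg hr0])
    exact h.congr (fun n => by simp [pow_one])
  set S : ℝ := ∑' n : ℕ, (n:ℝ) * ‖q‖ ^ n with hS
  have hS0 : 0 ≤ S := tsum_nonneg (fun n => by positivity)
  apply squeeze_zero_norm' (a := fun m : ℕ => (c⁻¹ * S) * ‖q‖ ^ (m-1))
  · filter_upwards [eventually_ge_atTop 1] with m hm
    have hb : ∀ n : ℕ, ‖(n:ℂ) * q ^ (m*n) / Qp q n‖ ≤ (c⁻¹ * ‖q‖ ^ (m-1)) * ((n:ℝ) * ‖q‖ ^ n) := by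
      intro n
      rw [norm_div, norm_mul, norm_pow, Complex.norm_natCast]
      have h3 : (0:ℝ) < ‖Qp q n‖ := lt_of_lt_of_le hc (hcn _)
      rw [div_le_iff₀ h3]
      rcases Nat.eq_zero_or_pos n with h | h
      · simp [h]
      · have h1 : ‖q‖ ^ (m*n) ≤ ‖q‖ ^ ((m-1)+n) := by
          apply pow_le_pow_of_le_one hr0 hq.le
          obtain ⟨k, rfl⟩ := Nat.exists_eq_add_of_le hm
          have hk : k ≤ k * n := Nat.le_mul_of_pos_right k h
          calc (1 + k) - 1 + n = k + n := by omega
            _ ≤ k * n + n := by omega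
            _ = (1 + k) * n := by ring
        calc (n:ℝ) * ‖q‖ ^ (m*n) ≤ (n:ℝ) * ‖q‖ ^ ((m-1)+n) := by
              apply mul_le_mul_of_nonneg_left h1 (Nat.cast_nonneg n)
          _ = (c⁻¹ * ‖q‖ ^ (m-1)) * ((n:ℝ) * ‖q‖ ^ n) * c := by rw [pow_add]; field_simp <;> ring
          _ ≤ (c⁻¹ * ‖q‖ ^ (m-1)) * ((n:ℝ) * ‖q‖ ^ n) * ‖Qp q n‖ := by
              apply mul_le_mul_of_nonneg_left (hcn _) (by positivity)
    calc ‖Dd q m‖ ≤ ∑' n : ℕ, (c⁻¹ * ‖q‖ ^ (m-1)) * ((n:ℝ) * ‖q‖ ^ n) := by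
          apply tsum_of_norm_bounded _ hb
          exact (hg0.mul_left _).hasSum
      _ = (c⁻¹ * ‖q‖ ^ (m-1)) * S := by rw [tsum_mul_left]
      _ = (c⁻¹ * S) * ‖q‖ ^ (m-1) := by ring
  · have h1 : Tendsto (fun m : ℕ => m - 1) atTop atTop := tendsto_sub_atTop_nat 1
    have := (tendsto_pow_atTop_nhds_zero_of_lt_one hr0 hq).comp h1
    simpa using this.const_mul (c⁻¹ * S)

noncomputable def PiT (q : ℂ) (m : ℕ) : ℂ := ∏' k : ℕ, (1 - q ^ (m + k))

lemma summable_log (q : ℂ) (hq : ‖q‖ < 1) {m : ℕ} (hm : ‖q‖ ^ m ≤ 1/2) :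
    Summable (fun k : ℕ => Complex.log (1 - q ^ (m + k))) := by
  have hr0 : (0:ℝ) ≤ ‖q‖ := norm_nonneg q
  apply Summable.of_norm_bounded (g := fun k : ℕ => (3/2 * ‖q‖ ^ m) * ‖q‖ ^ k)
  · exact (summable_geometric_of_lt_one hr0 hq).mul_left _
  · intro k
    have hb : ‖-q ^ (m + k)‖ ≤ 1/2 := by
      rw [norm_neg, norm_pow, pow_add]
      calc ‖q‖ ^ m * ‖q‖ ^ k ≤ ‖q‖ ^ m * 1 :=
            mul_le_mul_of_nonneg_left (pow_le_one₀ hr0 hq.le) (by positivity)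
        _ ≤ 1/2 := by rw [mul_one]; exact hm
    have := Complex.norm_log_one_add_half_le_self hb
    rw [show (1:ℂ) + -q ^ (m+k) = 1 - q ^ (m+k) by ring] at this
    calc ‖Complex.log (1 - q ^ (m + k))‖ ≤ 3/2 * ‖-q ^ (m+k)‖ := this
      _ = 3/2 * (‖q‖ ^ m * ‖q‖ ^ k) := by rw [norm_neg, norm_pow, pow_add]
      _ = (3/2 * ‖q‖ ^ m) * ‖q‖ ^ k := by ring

lemma multipliable_tail (q : ℂ) (hq : ‖q‖ < 1) {m : ℕ} (hm0 : m ≠ 0) :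
    Multipliable (fun k : ℕ => 1 - q ^ (m + k)) := by
  have hr0 : (0:ℝ) ≤ ‖q‖ := norm_nonneg q
  obtain ⟨M, hM⟩ : ∃ M : ℕ, ‖q‖ ^ M ≤ 1/2 := by
    obtain ⟨M, hM⟩ := ((tendsto_pow_atTop_nhds_zero_of_lt_one hr0 hq).eventually_le_const
      (show (0:ℝ) < 1/2 by norm_num)).exists
    exact ⟨M, hM⟩
  have hM' : ‖q‖ ^ (m + M) ≤ 1/2 := by
    calc ‖q‖ ^ (m + M) = ‖q‖ ^ m * ‖q‖ ^ M := pow_add _ _ _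
      _ ≤ 1 * ‖q‖ ^ M := mul_le_mul_of_nonneg_right (pow_le_one₀ hr0 hq.le) (by positivity)
      _ ≤ 1/2 := by rw [one_mul]; exact hM
  have hmult : Multipliable (fun k : ℕ => 1 - q ^ ((m + M) + k)) := by
    exact Complex.multipliable_of_summable_log (summable_log q hq hM')
  apply Multipliable.comp_nat_add (k := M)
  exact hmult.congr (fun n => by rw [show m + M + n = m + (n + M) by omega])

lemma PiT_rec (q : ℂ) (hq : ‖q‖ < 1) (m : ℕ) :
    PiT q m = (1 - q ^ m) * PiT q (m+1) := by
  rw [PiT, tprod_eq_zero_mul' ((multipliable_tail q hq (Nat.succ_ne_zero m)).congr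
    (fun n => by rw [show (m+1) + n = m + (n+1) by omega]))]
  rw [add_zero, PiT]
  congr 1
  exact tprod_congr (fun n => by rw [show m + (n+1) = (m+1) + n by omega])

lemma PiT_tendsto (q : ℂ) (hq : ‖q‖ < 1) :
    Tendsto (fun m => PiT q m) atTop (nhds 1) := by
  have hr0 : (0:ℝ) ≤ ‖q‖ := norm_nonneg q
  set L : ℕ → ℂ := fun m => ∑' k : ℕ, Complex.log (1 - q ^ (m + k)) with hL
  have hLt : Tendsto L atTop (nhds 0) := by
    apply squeeze_zero_norm' (a := fun m : ℕ => (3/2 * (1-‖q‖)⁻¹) * ‖q‖ ^ m)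
    · filter_upwards [(tendsto_pow_atTop_nhds_zero_of_lt_one hr0 hq).eventually_le_const
        (show (0:ℝ) < 1/2 by norm_num)] with m hm
      calc ‖L m‖ ≤ ∑' k : ℕ, (3/2 * ‖q‖ ^ m) * ‖q‖ ^ k := by
            apply tsum_of_norm_bounded
              (((summable_geometric_of_lt_one hr0 hq).mul_left (3/2 * ‖q‖ ^ m)).hasSum)
            intro k
            have hb : ‖-q ^ (m + k)‖ ≤ 1/2 := by
              rw [norm_neg, norm_pow, pow_add]
              calc ‖q‖ ^ m * ‖q‖ ^ k ≤ ‖q‖ ^ m * 1 :=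
                    mul_le_mul_of_nonneg_left (pow_le_one₀ hr0 hq.le) (by positivity)
                _ ≤ 1/2 := by rw [mul_one]; exact hm
            have h2 := Complex.norm_log_one_add_half_le_self hb
            rw [show (1:ℂ) + -q ^ (m+k) = 1 - q ^ (m+k) by ring] at h2
            calc ‖Complex.log (1 - q ^ (m + k))‖ ≤ 3/2 * ‖-q ^ (m+k)‖ := h2
              _ = (3/2 * ‖q‖ ^ m) * ‖q‖ ^ k := by rw [norm_neg, norm_pow, pow_add]; ring
        _ = (3/2 * ‖q‖ ^ m) * (1-‖q‖)⁻¹ := by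
            rw [tsum_mul_left, tsum_geometric_of_lt_one hr0 hq]
        _ = (3/2 * (1-‖q‖)⁻¹) * ‖q‖ ^ m := by ring
    · simpa using (tendsto_pow_atTop_nhds_zero_of_lt_one hr0 hq).const_mul (3/2 * (1-‖q‖)⁻¹)
  have hexp : Tendsto (fun m => Complex.exp (L m)) atTop (nhds 1) := by
    have := (Complex.continuous_exp.tendsto 0).comp hLt
    simpa [Function.comp_def] using this
  apply hexp.congr'
  filter_upwards [(tendsto_pow_atTop_nhds_zero_of_lt_one hr0 hq).eventually_le_const
    (show (0:ℝ) < 1/2 by norm_num), eventually_ge_atTop 1] with m hm hm1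
  have := Complex.cexp_tsum_eq_tprod (f := fun k => 1 - q ^ (m + k))
    (fun k => one_sub_pow_ne q hq (by omega))
    (summable_log q hq hm)
  exact this

lemma euler_orbit (q : ℂ) (hq : ‖q‖ < 1) {m : ℕ} (hm : m ≠ 0) :
    PiT q m * Ee q m = 1 := by
  have hconst : ∀ k : ℕ, PiT q (1 + k) * Ee q (1 + k) = PiT q 1 * Ee q 1 := by
    intro k
    induction k with
    | zero => rfl
    | succ n ih =>
      have h1 : PiT q (1+(n+1)) * Ee q (1+(n+1)) = PiT q (1+n) * Ee q (1+n) := by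
        rw [show 1 + (n+1) = (1+n) + 1 by omega, Ee_rec q hq (m := 1+n) (by omega),
          PiT_rec q hq (1+n)]
        ring
      rw [h1, ih]
  have hlim : Tendsto (fun k : ℕ => PiT q (1+k) * Ee q (1+k)) atTop (nhds 1) := by
    have h1 := ((PiT_tendsto q hq).comp (tendsto_add_atTop_nat 1)).mul
      ((Ee_tendsto q hq).comp (tendsto_add_atTop_nat 1))
    simpa [Function.comp, add_comm] using h1
  have h1 : PiT q 1 * Ee q 1 = 1 := by
    have h2 := hlim.congr (fun k => hconst k)
    exact tendsto_nhds_unique tendsto_const_nhds h2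
  obtain ⟨k, rfl⟩ : ∃ k, m = 1 + k := ⟨m - 1, by omega⟩
  rw [hconst k, h1]

lemma euler_inv (q : ℂ) (hq : ‖q‖ < 1) {m : ℕ} (hm : m ≠ 0) :
    PiT q (m+1) * Ee q m = (1 - q ^ m)⁻¹ := by
  have h1 := euler_orbit q hq hm
  rw [PiT_rec q hq m] at h1
  have h2 := one_sub_pow_ne q hq hm
  rw [inv_eq_one_div, eq_div_iff h2]
  linear_combination h1

lemma t_rec (q : ℂ) (hq : ‖q‖ < 1) {m : ℕ} (hm : m ≠ 0) :
    PiT q m * Dd q m = PiT q (m+1) * Dd q (m+1) + q ^ m / (1 - q ^ m) := by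
  have hD := Dd_rec q hq hm
  have hP := PiT_rec q hq m
  have hE := euler_inv q hq hm
  have h2 := one_sub_pow_ne q hq hm
  rw [div_eq_mul_inv]
  linear_combination Dd q m * hP - PiT q (m+1) * hD + q ^ m * hE

lemma t_telescope (q : ℂ) (hq : ‖q‖ < 1) (K : ℕ) :
    PiT q 1 * Dd q 1 = PiT q (K+1) * Dd q (K+1)
      + ∑ i ∈ Finset.range K, q ^ (i+1) / (1 - q ^ (i+1)) := by
  induction K with
  | zero => simp
  | succ n ih =>
    rw [ih, t_rec q hq (m := n+1) (Nat.succ_ne_zero n), Finset.sum_range_succ]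
    ring

lemma summable_RHS (q : ℂ) (hq : ‖q‖ < 1) :
    Summable (fun n : ℕ => q ^ (n+1) / (1 - q ^ (n+1))) := by
  have hr0 : (0:ℝ) ≤ ‖q‖ := norm_nonneg q
  apply Summable.of_norm_bounded (g := fun n : ℕ => (1 - ‖q‖)⁻¹ * ‖q‖ ^ n)
  · exact (summable_geometric_of_lt_one hr0 hq).mul_left _
  · intro n
    rw [norm_div, norm_pow]
    have h1 : 1 - ‖q‖ ≤ ‖1 - q ^ (n+1)‖ := by
      calc 1 - ‖q‖ ≤ 1 - ‖q‖ ^ (n+1) := by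
            have := pow_le_pow_of_le_one hr0 hq.le (show 1 ≤ n+1 by omega)
            simp only [pow_one] at this; linarith
        _ = ‖(1:ℂ)‖ - ‖q ^ (n+1)‖ := by rw [norm_one, norm_pow]
        _ ≤ ‖1 - q ^ (n+1)‖ := norm_sub_norm_le _ _
    have h2 : (0:ℝ) < 1 - ‖q‖ := by linarith
    have h3 : (0:ℝ) < ‖1 - q ^ (n+1)‖ := lt_of_lt_of_le h2 h1
    rw [div_le_iff₀ h3]
    calc ‖q‖ ^ (n+1) ≤ ‖q‖ ^ n := pow_le_pow_of_le_one hr0 hq.le (Nat.le_succ n)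
      _ = ((1 - ‖q‖)⁻¹ * ‖q‖ ^ n) * (1 - ‖q‖) := by
          rw [mul_comm ((1 - ‖q‖)⁻¹) _, mul_assoc, inv_mul_cancel₀ h2.ne', mul_one]
      _ ≤ ((1 - ‖q‖)⁻¹ * ‖q‖ ^ n) * ‖1 - q ^ (n+1)‖ := by
          apply mul_le_mul_of_nonneg_left h1 (by positivity)

lemma t_value (q : ℂ) (hq : ‖q‖ < 1) :
    PiT q 1 * Dd q 1 = ∑' n : ℕ, q ^ (n+1) / (1 - q ^ (n+1)) := by
  have hsum := summable_RHS q hq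
  have hpart := hsum.hasSum.tendsto_sum_nat
  have htail : Tendsto (fun K : ℕ => PiT q (K+1) * Dd q (K+1)) atTop (nhds 0) := by
    have h1 := ((PiT_tendsto q hq).comp (tendsto_add_atTop_nat 1)).mul
      ((Dd_tendsto q hq).comp (tendsto_add_atTop_nat 1))
    simpa [Function.comp, add_comm] using h1
  have hcomb : Tendsto (fun K : ℕ => PiT q (K+1) * Dd q (K+1)
      + ∑ i ∈ Finset.range K, q ^ (i+1) / (1 - q ^ (i+1))) atTop
      (nhds (0 + ∑' n : ℕ, q ^ (n+1) / (1 - q ^ (n+1)))) := htail.add hpart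
  rw [zero_add] at hcomb
  have hconst : Tendsto (fun _ : ℕ => PiT q 1 * Dd q 1) atTop (nhds (PiT q 1 * Dd q 1)) :=
    tendsto_const_nhds
  have : Tendsto (fun K : ℕ => PiT q (K+1) * Dd q (K+1)
      + ∑ i ∈ Finset.range K, q ^ (i+1) / (1 - q ^ (i+1))) atTop (nhds (PiT q 1 * Dd q 1)) :=
    hconst.congr (fun K => t_telescope q hq K)
  exact tendsto_nhds_unique this hcomb

/-- For `‖q‖ < 1`, `∑_{n=1}^∞ n q^n (q^{n+1};q)_∞ = ∑_{n=1}^∞ q^n/(1-q^n)`. -/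
theorem weighted_tail_product_divisor (q : ℂ) (hq : ‖q‖ < 1) :
    (∑' n : ℕ, ((n : ℂ) + 1) * q ^ (n + 1) * ∏' j : ℕ, (1 - q ^ (n + 2 + j))) =
      ∑' n : ℕ, q ^ (n + 1) / (1 - q ^ (n + 1)) := by
  rw [← t_value q hq]
  have hsplit : ∀ n : ℕ, Qp q (n+1) * PiT q (n+2) = PiT q 1 := by
    intro n
    have hmult : Multipliable (fun k : ℕ => 1 - q ^ (1 + (k + (n+1)))) :=
      (multipliable_tail q hq (m := n+2) (by omega)).congr
        (fun k => by rw [show (n+2) + k = 1 + (k + (n+1)) by omega])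
    have h := Multipliable.prod_mul_tprod_nat_mul' (f := fun k : ℕ => 1 - q ^ (1 + k)) (k := n+1) hmult
    calc Qp q (n+1) * PiT q (n+2)
        = (∏ i ∈ Finset.range (n+1), (1 - q ^ (1 + i))) * ∏' k : ℕ, (1 - q ^ (1 + (k + (n+1)))) := by
          congr 1
          · exact Finset.prod_congr rfl (fun i _ => by rw [add_comm 1 i])
          · exact tprod_congr (fun k => by rw [show (n+2) + k = 1 + (k + (n+1)) by omega])
      _ = ∏' k : ℕ, (1 - q ^ (1 + k)) := h
      _ = PiT q 1 := rfl
  have hterm : ∀ n : ℕ, ((n : ℂ) + 1) * q ^ (n + 1) * ∏' j : ℕ, (1 - q ^ (n + 2 + j))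
      = PiT q 1 * (((n+1 : ℕ) : ℂ) * q ^ (1 * (n+1)) / Qp q (n+1)) := by
    intro n
    have h1 := hsplit n
    have h2 : Qp q (n+1) ≠ 0 := Qp_ne_zero q hq (n+1)
    have h3 : (∏' j : ℕ, (1 - q ^ (n + 2 + j))) = PiT q (n+2) := rfl
    rw [h3, ← h1]
    push_cast
    rw [one_mul]
    field_simp
  rw [tsum_congr hterm, tsum_mul_left]
  congr 1
  have hsum := summable_D q hq (m := 1) one_ne_zero
  rw [Dd, Summable.tsum_eq_zero_add hsum]
  simp
end

section
/- For |q|<1, ∑_{n=1}^∞ (−1)^{n+1} q^{n(n+1)/2} / ((q;q)_n (1−q^n)) = ∑_{n=1}^∞ q^n/(1−q^n). -/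
open Finset Filter Topology

noncomputable def qP (q : ℂ) (n : ℕ) : ℂ := ∏ j ∈ Finset.range n, (1 - q ^ (j + 1))

noncomputable def qB (q : ℂ) (n k : ℕ) : ℂ :=
  if k ≤ n then qP q n / (qP q k * qP q (n - k)) else 0

def Tn (j : ℕ) : ℕ := ∑ i ∈ Finset.range j, (i + 1)

lemma Tn_succ (j : ℕ) : Tn (j + 1) = Tn j + (j + 1) := Finset.sum_range_succ _ _

lemma Tn_eq (n : ℕ) : n * (n + 1) / 2 = Tn n := by
  induction n with
  | zero => simp [Tn]
  | succ n ih =>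
      rw [Tn_succ, ← ih]
      have h2 : 2 ∣ n * (n + 1) := Nat.even_mul_succ_self n |>.two_dvd
      have h5 : (n + 1) * (n + 1 + 1) = n * (n + 1) + 2 * (n + 1) := by ring
      omega

section
variable {q : ℂ} (hq : ‖q‖ < 1)

include hq

lemma one_sub_qpow_ne (j : ℕ) : (1 : ℂ) - q ^ (j + 1) ≠ 0 := by
  have : ‖q ^ (j + 1)‖ < 1 := by
    rw [norm_pow]
    exact pow_lt_one₀ (norm_nonneg q) hq (Nat.succ_ne_zero j)
  intro h
  rw [sub_eq_zero] at h
  rw [← h, norm_one] at this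
  exact lt_irrefl 1 this

lemma qP_ne (n : ℕ) : qP q n ≠ 0 :=
  Finset.prod_ne_zero_iff.2 fun j _ => one_sub_qpow_ne hq j

omit hq in
lemma qP_succ (n : ℕ) : qP q (n + 1) = qP q n * (1 - q ^ (n + 1)) :=
  Finset.prod_range_succ _ _

/-- q-Pascal identity. -/
lemma qB_pascal (n k : ℕ) (hk : k ≤ n) :
    qB q (n + 1) (k + 1) = qB q n (k + 1) + q ^ (n - k) * qB q n k := by
  obtain ⟨m, rfl⟩ := Nat.exists_eq_add_of_le hk
  rcases m with _ | m
  · have hB1 : qB q (k + 0 + 1) (k + 1) = 1 := by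
      rw [qB, if_pos (by omega)]
      have : k + 0 + 1 - (k + 1) = 0 := by omega
      rw [this]
      rw [show qP q 0 = 1 from rfl, mul_one]
      exact div_self (qP_ne hq (k+1))
    have hB2 : qB q (k + 0) (k + 1) = 0 := by rw [qB, if_neg (by omega)]
    have hB3 : qB q (k + 0) k = 1 := by
      rw [qB, if_pos (by omega)]
      have : k + 0 - k = 0 := by omega
      rw [this]
      rw [show qP q 0 = 1 from rfl, mul_one]
      exact div_self (qP_ne hq k)
    rw [hB1, hB2, hB3]
    simp
  · have h1 : k + 1 ≤ k + (m + 1) := by omega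
    have h2 : k + (m + 1) + 1 - (k + 1) = m + 1 := by omega
    have h3 : k + (m + 1) - (k + 1) = m := by omega
    have h4 : k + (m + 1) - k = m + 1 := by omega
    simp only [qB, if_pos (by omega : k + 1 ≤ k + (m+1) + 1), if_pos h1,
      if_pos (by omega : k ≤ k + (m+1)), h2, h3, h4]
    have e1 : qP q (k + (m + 1) + 1) = qP q (k + (m+1)) * (1 - q ^ (k + m + 2)) := by
      rw [qP_succ (k + (m+1))]; ring_nf
    have e2 : qP q (m + 1) = qP q m * (1 - q ^ (m + 1)) := qP_succ m
    have e3 : qP q (k + 1) = qP q k * (1 - q ^ (k + 1)) := qP_succ k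
    rw [e1, e2, e3]
    have hPk := qP_ne hq k
    have hPm := qP_ne hq m
    have hPn := qP_ne hq (k + (m+1))
    have hk1 := one_sub_qpow_ne hq k
    have hm1 := one_sub_qpow_ne hq m
    field_simp
    ring
end

section
variable {q : ℂ} (hq : ‖q‖ < 1)
include hq

lemma qB_zero (n : ℕ) : qB q n 0 = 1 := by
  rw [qB, if_pos (Nat.zero_le n)]
  rw [show qP q 0 = 1 from rfl, one_mul, Nat.sub_zero]
  exact div_self (qP_ne hq n)

omit hq in
lemma qB_gt {n k : ℕ} (h : n < k) : qB q n k = 0 := by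
  rw [qB, if_neg (by omega)]

lemma lemA (n : ℕ) : ∀ x : ℂ, (∀ i, i ≤ n → 1 - x * q ^ i ≠ 0) →
    ∑ j ∈ Finset.range (n+1), (-1:ℂ)^j * q^(Tn j) * qB q n j / (1 - x * q^j)
      = qP q n / ∏ i ∈ Finset.range (n+1), (1 - x * q^i) := by
  induction n with
  | zero =>
      intro x hx
      simp [qB_zero hq, Tn, qP]
  | succ n ih =>
      intro x hx
      have hx' : ∀ i, i ≤ n → 1 - x * q ^ i ≠ 0 := fun i hi => hx i (by omega)
      have hxq : ∀ i, i ≤ n → 1 - (x * q) * q ^ i ≠ 0 := by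
        intro i hi
        have h := hx (i+1) (by omega)
        rwa [pow_succ', ← mul_assoc] at h
      have step : ∀ i ∈ Finset.range (n+1),
          (-1:ℂ)^(i+1) * q^(Tn (i+1)) * qB q (n+1) (i+1) / (1 - x * q^(i+1))
          = (-1:ℂ)^(i+1) * q^(Tn (i+1)) * qB q n (i+1) / (1 - x * q^(i+1))
            + (-(q^(n+1))) * ((-1:ℂ)^i * q^(Tn i) * qB q n i / (1 - (x*q) * q^i)) := by
        intro i hi
        rw [Finset.mem_range] at hi
        have hin : i ≤ n := by omega
        rw [qB_pascal hq n i hin]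
        have e1 : (1 : ℂ) - (x*q) * q^i = 1 - x * q^(i+1) := by
          rw [pow_succ', ← mul_assoc]
        rw [e1]
        have e2 : q^(Tn (i+1)) = q^(Tn i) * (q^(i+1)) := by
          rw [Tn_succ, pow_add]
        have e3 : (q : ℂ)^(n+1) = q^(n-i) * q^(i+1) := by
          rw [← pow_add]
          congr 1
          omega
        rw [e2, e3]
        have e4 : ((-1:ℂ))^(i+1) = -(-1:ℂ)^i := by
          rw [pow_succ]; ring
        rw [e4]
        field_simp
        ring
      rw [Finset.sum_range_succ']
      rw [Finset.sum_congr rfl step, Finset.sum_add_distrib, ← Finset.mul_sum]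
      have hf0 : (-1:ℂ)^0 * q^(Tn 0) * qB q (n+1) 0 / (1 - x * q^0)
          = (-1:ℂ)^0 * q^(Tn 0) * qB q n 0 / (1 - x * q^0) := by
        rw [qB_zero hq, qB_zero hq]
      rw [hf0]
      have hsum1 : (∑ i ∈ Finset.range (n+1),
            (-1:ℂ)^(i+1) * q^(Tn (i+1)) * qB q n (i+1) / (1 - x * q^(i+1)))
            + (-1:ℂ)^0 * q^(Tn 0) * qB q n 0 / (1 - x * q^0)
          = ∑ j ∈ Finset.range (n+1), (-1:ℂ)^j * q^(Tn j) * qB q n j / (1 - x * q^j) := by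
        have h1 := Finset.sum_range_succ'
          (fun j => (-1:ℂ)^j * q^(Tn j) * qB q n j / (1 - x * q^j)) (n+1)
        have h2 := Finset.sum_range_succ
          (fun j => (-1:ℂ)^j * q^(Tn j) * qB q n j / (1 - x * q^j)) (n+1)
        simp only [qB_gt (Nat.lt_succ_self n), mul_zero, zero_mul, zero_div, add_zero] at h2
        rw [h2] at h1
        exact h1.symm
      have goal1 : (∑ i ∈ Finset.range (n+1),
            (-1:ℂ)^(i+1) * q^(Tn (i+1)) * qB q n (i+1) / (1 - x * q^(i+1)))
            + -(q^(n+1)) * ∑ i ∈ Finset.range (n+1),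
              (-1:ℂ)^i * q^(Tn i) * qB q n i / (1 - (x*q) * q^i)
            + (-1:ℂ)^0 * q^(Tn 0) * qB q n 0 / (1 - x * q^0)
          = (∑ j ∈ Finset.range (n+1), (-1:ℂ)^j * q^(Tn j) * qB q n j / (1 - x * q^j))
            + -(q^(n+1)) * ∑ i ∈ Finset.range (n+1),
              (-1:ℂ)^i * q^(Tn i) * qB q n i / (1 - (x*q) * q^i) := by
        rw [← hsum1]; ring
      rw [goal1, ih x hx', ih (x*q) hxq]
      -- now pure algebra with products
      set Px := ∏ i ∈ Finset.range (n+1), (1 - x * q^i) with hPxdef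
      set Q := ∏ i ∈ Finset.range (n+1), (1 - (x*q) * q^i) with hQdef
      set R := ∏ i ∈ Finset.range (n+2), (1 - x * q^i) with hRdef
      have hR1 : R = Px * (1 - x * q^(n+1)) := Finset.prod_range_succ _ _
      have hR2 : R = (1 - x) * Q := by
        rw [hRdef, Finset.prod_range_succ', pow_zero, mul_one, mul_comm, hQdef]
        congr 1
        apply Finset.prod_congr rfl
        intro i _
        rw [pow_succ', ← mul_assoc]
      have hPxne : Px ≠ 0 := Finset.prod_ne_zero_iff.2 fun i hi =>
        hx i (by rw [Finset.mem_range] at hi; omega)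
      have hQne : Q ≠ 0 := Finset.prod_ne_zero_iff.2 fun i hi =>
        hxq i (by rw [Finset.mem_range] at hi; omega)
      have hRne : R ≠ 0 := Finset.prod_ne_zero_iff.2 fun i hi =>
        hx i (by rw [Finset.mem_range] at hi; omega)
      rw [qP_succ]
      have expand : -q^(n+1) * (qP q n / Q) = (-q^(n+1) * qP q n) / Q :=
        (mul_div_assoc _ _ _).symm
      rw [expand, div_add_div _ _ hPxne hQne,
        div_eq_div_iff (mul_ne_zero hPxne hQne) hRne]
      linear_combination (qP q n * Q) * hR1 - (q^(n+1) * qP q n * Px) * hR2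
end

section
variable {q : ℂ} (hq : ‖q‖ < 1)
include hq

lemma vanHamme (N : ℕ) :
    ∑ k ∈ Finset.range N, (-1:ℂ)^k * q^(Tn (k+1)) * qB q N (k+1) / (1 - q^(k+1))
      = ∑ k ∈ Finset.range N, q^(k+1) / (1 - q^(k+1)) := by
  induction N with
  | zero => simp
  | succ N ih =>
    have step : ∀ k ∈ Finset.range (N+1),
        (-1:ℂ)^k * q^(Tn (k+1)) * qB q (N+1) (k+1) / (1 - q^(k+1))
        = (-1:ℂ)^k * q^(Tn (k+1)) * qB q N (k+1) / (1 - q^(k+1))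
          + q^(N+1) * ((-1:ℂ)^k * q^(Tn k) * qB q N k / (1 - q * q^k)) := by
      intro k hk
      rw [Finset.mem_range] at hk
      have hkN : k ≤ N := by omega
      rw [qB_pascal hq N k hkN]
      have e1 : (1:ℂ) - q * q^k = 1 - q^(k+1) := by rw [pow_succ']
      rw [e1]
      have e2 : (q:ℂ)^(Tn (k+1)) = q^(Tn k) * q^(k+1) := by rw [Tn_succ, pow_add]
      have e3 : (q:ℂ)^(N+1) = q^(N-k) * q^(k+1) := by
        rw [← pow_add]; congr 1; omega
      rw [e2, e3]
      ring
    rw [Finset.sum_congr rfl step, Finset.sum_add_distrib, ← Finset.mul_sum]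
    have hA : ∑ k ∈ Finset.range (N+1),
          (-1:ℂ)^k * q^(Tn (k+1)) * qB q N (k+1) / (1 - q^(k+1))
        = ∑ k ∈ Finset.range N,
          (-1:ℂ)^k * q^(Tn (k+1)) * qB q N (k+1) / (1 - q^(k+1)) := by
      rw [Finset.sum_range_succ, qB_gt (Nat.lt_succ_self N)]
      simp
    have hB : ∑ k ∈ Finset.range (N+1), (-1:ℂ)^k * q^(Tn k) * qB q N k / (1 - q * q^k)
        = qP q N / ∏ i ∈ Finset.range (N+1), (1 - q * q^i) := by
      apply lemA hq N q
      intro i _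
      have h := one_sub_qpow_ne hq i
      rwa [pow_succ'] at h
    have hprod : ∏ i ∈ Finset.range (N+1), (1 - q * q^i) = qP q (N+1) := by
      simp only [qP]
      apply Finset.prod_congr rfl
      intro i _
      rw [pow_succ']
    rw [hA, hB, hprod, ih, qP_succ, Finset.sum_range_succ]
    congr 1
    rw [mul_comm (qP q N), ← div_div, div_right_comm, div_self (qP_ne hq N), mul_one_div]
end

section
variable {q : ℂ} (hq : ‖q‖ < 1)
include hq

/-- Uniform bound on finite products of `1 - q^(m+i+1)`. -/
lemma prodBound (m t : ℕ) :
    ‖∏ i ∈ Finset.range t, (1 - q ^ (m + i + 1))‖ ≤ Real.exp ((1 - ‖q‖)⁻¹) := by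
  set r := ‖q‖ with hr
  have hr0 : 0 ≤ r := norm_nonneg q
  rw [norm_prod]
  have h1 : ∀ i ∈ Finset.range t, ‖(1 : ℂ) - q ^ (m + i + 1)‖ ≤ Real.exp (r ^ i) := by
    intro i _
    have h2 : ‖(1 : ℂ) - q ^ (m + i + 1)‖ ≤ 1 + r ^ (m + i + 1) := by
      calc ‖(1 : ℂ) - q ^ (m + i + 1)‖ ≤ ‖(1:ℂ)‖ + ‖q ^ (m + i + 1)‖ := norm_sub_le _ _
        _ = 1 + r ^ (m + i + 1) := by rw [norm_one, norm_pow]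
    have h3 : r ^ (m + i + 1) ≤ r ^ i := by
      apply pow_le_pow_of_le_one hr0 hq.le
      omega
    have h4 : (1 : ℝ) + r ^ i ≤ Real.exp (r ^ i) := by
      have := Real.add_one_le_exp (r ^ i)
      linarith
    linarith
  calc ∏ i ∈ Finset.range t, ‖(1 : ℂ) - q ^ (m + i + 1)‖
      ≤ ∏ i ∈ Finset.range t, Real.exp (r ^ i) := by
        apply Finset.prod_le_prod (fun i _ => norm_nonneg _) h1
    _ = Real.exp (∑ i ∈ Finset.range t, r ^ i) := (Real.exp_sum _ _).symm
    _ ≤ Real.exp ((1 - r)⁻¹) := by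
        apply Real.exp_le_exp.2
        rw [← tsum_geometric_of_lt_one hr0 hq]
        exact Summable.sum_le_tsum _ (fun i _ => pow_nonneg hr0 i)
          (summable_geometric_of_lt_one hr0 hq)

lemma qP_norm_lb (n : ℕ) : (1 - ‖q‖) ^ n ≤ ‖qP q n‖ := by
  rw [qP, norm_prod]
  have hc : (1 - ‖q‖) ^ n = ∏ _i ∈ Finset.range n, (1 - ‖q‖) := by
    rw [Finset.prod_const, Finset.card_range]
  rw [hc]
  apply Finset.prod_le_prod (fun i _ => by linarith [norm_nonneg q])
  intro i _
  have h1 : ‖q ^ (i + 1)‖ ≤ ‖q‖ := by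
    rw [norm_pow]
    apply pow_le_of_le_one (norm_nonneg q) hq.le
    omega
  calc 1 - ‖q‖ ≤ ‖(1:ℂ)‖ - ‖q ^ (i+1)‖ := by rw [norm_one]; linarith
    _ ≤ ‖(1:ℂ) - q ^ (i+1)‖ := norm_sub_norm_le _ _

lemma qB_eq {N k : ℕ} (hkN : k + 1 ≤ N) :
    qB q N (k + 1) = (∏ i ∈ Finset.range (k + 1), (1 - q ^ (N - k - 1 + i + 1))) /
      qP q (k + 1) := by
  obtain ⟨m, rfl⟩ : ∃ m, N = m + (k + 1) := ⟨N - k - 1, by omega⟩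
  have hm1 : m + (k + 1) - (k + 1) = m := by omega
  have hm2 : m + (k + 1) - k - 1 = m := by omega
  rw [qB, if_pos hkN, hm1, hm2]
  have : qP q (m + (k + 1)) = qP q m * ∏ i ∈ Finset.range (k + 1), (1 - q ^ (m + i + 1)) := by
    rw [qP, qP, Finset.prod_range_add]
  rw [this, mul_comm (qP q (k+1)) (qP q m), mul_div_mul_left _ _ (qP_ne hq m)]
end

/-- For `‖q‖ < 1`,
`∑_{n=1}^∞ (-1)^{n+1} q^{n(n+1)/2} / ((q;q)_n (1-q^n)) = ∑_{n=1}^∞ q^n/(1-q^n)`. -/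
theorem alt_qfact_lambert (q : ℂ) (hq : ‖q‖ < 1) :
    (∑' n : ℕ, (-1 : ℂ) ^ (n + 2) * q ^ ((n + 1) * (n + 2) / 2) /
        ((∏ j ∈ Finset.range (n + 1), (1 - q ^ (j + 1))) * (1 - q ^ (n + 1)))) =
      ∑' n : ℕ, q ^ (n + 1) / (1 - q ^ (n + 1)) := by
  have hr0 : (0:ℝ) ≤ ‖q‖ := norm_nonneg q
  have hs0 : (0:ℝ) < 1 - ‖q‖ := by linarith
  set r : ℝ := ‖q‖ with hrdef
  set C : ℝ := Real.exp ((1 - r)⁻¹) with hCdef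
  have hC0 : 0 < C := Real.exp_pos _
  set s : ℝ := (1 - r)⁻¹ with hsdef
  have hs0' : 0 < s := inv_pos.2 hs0
  set f : ℕ → ℕ → ℂ :=
    fun N k => (-1:ℂ)^k * q^(Tn (k+1)) * qB q N (k+1) / (1 - q^(k+1)) with hfdef
  set a : ℕ → ℂ :=
    fun k => (-1:ℂ)^k * q^(Tn (k+1)) / (qP q (k+1) * (1 - q^(k+1))) with hadef
  set bound : ℕ → ℝ := fun k => C * r^(Tn (k+1)) * s^(k+2) with hbounddef
  have hbound_nonneg : ∀ k, 0 ≤ bound k := by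
    intro k
    have : 0 ≤ r ^ (Tn (k+1)) := pow_nonneg hr0 _
    positivity
  have hσ : ∀ k : ℕ, 1 - r ≤ ‖(1:ℂ) - q^(k+1)‖ := by
    intro k
    have h1 : ‖q ^ (k + 1)‖ ≤ r := by
      rw [norm_pow]
      apply pow_le_of_le_one hr0 hq.le
      omega
    calc 1 - r ≤ ‖(1:ℂ)‖ - ‖q^(k+1)‖ := by rw [norm_one]; linarith
      _ ≤ ‖(1:ℂ) - q^(k+1)‖ := norm_sub_norm_le _ _
  have hσ0 : ∀ k : ℕ, 0 < ‖(1:ℂ) - q^(k+1)‖ := fun k => lt_of_lt_of_le hs0 (hσ k)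
  -- summability of the bound
  have h_sum : Summable bound := by
    apply summable_of_ratio_norm_eventually_le (r := 1/2) (by norm_num)
    have hev : ∀ᶠ k : ℕ in atTop, r^(k+2) * s < 1/2 := by
      have h0 : Tendsto (fun k : ℕ => r^(k+2) * s) atTop (𝓝 (0 * s)) := by
        apply Tendsto.mul_const s
        exact (tendsto_pow_atTop_nhds_zero_of_norm_lt_one
          (by rwa [Real.norm_of_nonneg hr0])).comp (tendsto_add_atTop_nat 2)
      rw [zero_mul] at h0
      exact h0.eventually (gt_mem_nhds (by norm_num))
    filter_upwards [hev] with k hk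
    have key : bound (k+1) = (r^(k+2) * s) * bound k := by
      simp only [hbounddef]
      rw [show Tn (k+1+1) = Tn (k+1) + (k+2) from Tn_succ (k+1), pow_add,
        show k+1+2 = (k+2)+1 from rfl, pow_succ]
      ring
    rw [Real.norm_of_nonneg (hbound_nonneg _), Real.norm_of_nonneg (hbound_nonneg _), key]
    apply mul_le_mul_of_nonneg_right hk.le (hbound_nonneg k)
  -- bound dominates
  have h_bound : ∀ N k, ‖f N k‖ ≤ bound k := by
    intro N k
    by_cases hkN : k + 1 ≤ N
    · rw [hfdef]
      simp only
      rw [qB_eq hq hkN, norm_div, norm_mul, norm_mul, norm_pow, norm_neg, norm_one,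
        one_pow, one_mul, norm_div, norm_pow]
      have hPle : ‖∏ i ∈ Finset.range (k+1), (1 - q^(N-k-1+i+1))‖ ≤ C :=
        prodBound hq (N-k-1) (k+1)
      have hden1 : (1-r)^(k+1) ≤ ‖qP q (k+1)‖ := qP_norm_lb hq (k+1)
      have h1 : (0:ℝ) < ‖qP q (k+1)‖ := lt_of_lt_of_le (by positivity) hden1
      calc r ^ Tn (k+1) * (‖∏ i ∈ Finset.range (k+1), (1 - q^(N-k-1+i+1))‖
              / ‖qP q (k+1)‖) / ‖(1:ℂ) - q^(k+1)‖
          ≤ r ^ Tn (k+1) * (C / (1-r)^(k+1)) / (1-r) := by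
            gcongr <;> first
              | exact pow_nonneg hr0 _ | exact hσ k | exact hPle | exact hden1
        _ = bound k := by
            rw [hbounddef]
            simp only
            rw [hsdef, inv_pow]
            field_simp
            ring
    · rw [hfdef]
      simp only
      rw [qB_gt (show N < k+1 by omega), mul_zero, zero_div, norm_zero]
      exact hbound_nonneg k
  -- pointwise limits
  have h_lim : ∀ k, Tendsto (fun N => f N k) atTop (𝓝 (a k)) := by
    intro k
    have hw : Tendsto
        (fun N : ℕ => ∏ i ∈ Finset.range (k+1), (1 - q^(N - k - 1 + i + 1)))
        atTop (𝓝 (∏ _i ∈ Finset.range (k+1), (1:ℂ))) := by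
      apply tendsto_finset_prod
      intro i _
      have h2 : Tendsto (fun N : ℕ => N - k - 1 + i + 1) atTop atTop :=
        tendsto_atTop_atTop.2 fun b => ⟨b + k + 1, fun N hN => by omega⟩
      have h3 : Tendsto (fun N : ℕ => q^(N - k - 1 + i + 1)) atTop (𝓝 0) :=
        (tendsto_pow_atTop_nhds_zero_of_norm_lt_one hq).comp h2
      have h4 := (tendsto_const_nhds (x := (1:ℂ)) (f := atTop (α := ℕ))).sub h3
      simpa using h4
    rw [Finset.prod_const_one] at hw
    have h5 : Tendsto (fun N : ℕ => a k *
        ∏ i ∈ Finset.range (k+1), (1 - q^(N - k - 1 + i + 1))) atTop (𝓝 (a k * 1)) :=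
      tendsto_const_nhds.mul hw
    rw [mul_one] at h5
    have hev : (fun N : ℕ => a k *
        ∏ i ∈ Finset.range (k+1), (1 - q^(N - k - 1 + i + 1))) =ᶠ[atTop]
        (fun N => f N k) := by
      filter_upwards [eventually_ge_atTop (k+1)] with N hN
      rw [hfdef]
      simp only
      rw [qB_eq hq hN, hadef]
      simp only
      field_simp
    exact Filter.Tendsto.congr' hev h5
  have main := tendsto_tsum_of_dominated_convergence h_sum h_lim
    (Filter.Eventually.of_forall h_bound)
  have htsum : ∀ N, (∑' k, f N k) = ∑ k ∈ Finset.range N, q^(k+1)/(1-q^(k+1)) := by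
    intro N
    rw [tsum_eq_sum (s := Finset.range N), vanHamme hq N]
    intro k hk
    rw [Finset.mem_range, not_lt] at hk
    rw [hfdef]
    simp only
    rw [qB_gt (show N < k+1 by omega), mul_zero, zero_div]
  have hb : Summable (fun k : ℕ => q^(k+1)/(1 - q^(k+1))) := by
    apply Summable.of_norm_bounded (g := fun k => s * r^k)
      ((summable_geometric_of_lt_one hr0 hq).mul_left _)
    intro k
    rw [norm_div, norm_pow]
    calc r^(k+1) / ‖(1:ℂ) - q^(k+1)‖ ≤ r^(k+1) / (1-r) := by
          gcongr <;> first | exact pow_nonneg hr0 _ | exact hσ k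
      _ = s * r^(k+1) := by rw [div_eq_inv_mul, hsdef]
      _ ≤ s * r^k := by
          apply mul_le_mul_of_nonneg_left _ hs0'.le
          apply pow_le_pow_of_le_one hr0 hq.le
          omega
  have hbs := hb.hasSum.tendsto_sum_nat
  have main' : Tendsto (fun N => ∑ k ∈ Finset.range N, q^(k+1)/(1-q^(k+1))) atTop
      (𝓝 (∑' k, a k)) := main.congr htsum
  have hkey : (∑' k, a k) = ∑' k : ℕ, q^(k+1)/(1 - q^(k+1)) :=
    tendsto_nhds_unique main' hbs
  rw [← hkey]
  apply tsum_congr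
  intro n
  rw [hadef]
  simp only
  rw [show ((-1:ℂ))^(n+2) = (-1:ℂ)^n from by rw [pow_add]; norm_num]
  rw [show (n+1)*(n+2)/2 = Tn (n+1) from Tn_eq (n+1)]
  rfl
end
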